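/- arXiv:math/0610702 — 2 statements merged into one kernel-verified Lean document; each statement's English description precedes it below -/
import Mathlib

section
/- Let W be the Coxeter group of an E-GCM graph, J ⊆ {1,…,n} with parabolic subgroup W_J finite, and let λ be a position with λ_i > 0 for i ∉ J and λ_j = 0 for j ∈ J. If s_{i_p}⋯s_{i_2}s_{i_1} is a reduced expression of an element of the set W^J of minimal coset representatives, then (γ_{i_1},…,γ_{i_p}) is a legal firing sequence for the numbers game played from initial position λ: at each step the node about to be fired has strictly positive population. -/
open Real

/-- The quasi-standard reflection `s_i` as a linear endomorphism of `V = ℝⁿ` with basis of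
simple roots `α_j = Pi.single j 1`: `s_i(v) = v − 2B(α_i,v)α_i` where `B(α_i,α_j) = M_ij/2`. -/
noncomputable def reflLin {n : ℕ} (M : Matrix (Fin n) (Fin n) ℝ) (i : Fin n) :
    Module.End ℝ (Fin n → ℝ) where
  toFun v := v - (∑ j, M i j * v j) • (Pi.single i 1 : Fin n → ℝ)
  map_add' v w := by
    ext t
    simp only [Pi.add_apply, Pi.sub_apply, Pi.smul_apply, smul_eq_mul, mul_add,
      Finset.sum_add_distrib]
    ring
  map_smul' c v := by
    ext t
    simp only [Pi.smul_apply, Pi.sub_apply, smul_eq_mul, RingHom.id_apply]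
    rw [show (∑ j, M i j * (c * v j)) = c * ∑ j, M i j * v j from by
      rw [Finset.mul_sum]; exact Finset.sum_congr rfl fun j _ => by ring]
    ring

/-- `M` is an E-generalized Cartan matrix whose amplitude products correspond to the
Coxeter matrix `K` (where `K i j = 0` encodes `m_ij = ∞`). -/
def IsEGCM {n : ℕ} (M : Matrix (Fin n) (Fin n) ℝ) (K : CoxeterMatrix (Fin n)) : Prop :=
  (∀ i, M i i = 2) ∧ (∀ i j, i ≠ j → M i j ≤ 0) ∧ (∀ i j, M i j = 0 ↔ M j i = 0) ∧
  (∀ i j, i ≠ j →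
    (K i j = 0 ∧ 4 ≤ M i j * M j i) ∨
    (2 ≤ K i j ∧ M i j * M j i = 4 * Real.cos (π / (K i j : ℝ)) ^ 2))

/-- Firing node `i` in the numbers game on an E-GCM graph: the population at each node `j`
is transformed by `λ_j ↦ λ_j - M_ij·λ_i`. -/
def fire {n : ℕ} (M : Matrix (Fin n) (Fin n) ℝ) (lam : Fin n → ℝ) (i : Fin n) : Fin n → ℝ :=
  fun j => lam j - M i j * lam i

/-- The position obtained by playing the firing sequence `seq` from position `lam`. -/
def play {n : ℕ} (M : Matrix (Fin n) (Fin n) ℝ) (lam : Fin n → ℝ) :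
    List (Fin n) → (Fin n → ℝ)
  | [] => lam
  | i :: rest => play M (fire M lam i) rest

/-- `seq` is a legal firing sequence from `lam`: each node is fired only when its
population is strictly positive. -/
def Legal {n : ℕ} (M : Matrix (Fin n) (Fin n) ℝ) (lam : Fin n → ℝ) : List (Fin n) → Prop
  | [] => True
  | i :: rest => 0 < lam i ∧ Legal M (fire M lam i) rest


namespace NumbersGame

/-- Pair sequence iterating the matrix `[[ab-1, a], [-b, -1]]`. -/
def Rseq (a b : ℝ) (xy : ℝ × ℝ) : ℕ → ℝ × ℝ
  | 0 => xy
  | r+1 => ((a*b-1) * (Rseq a b xy r).1 + a * (Rseq a b xy r).2,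
            -(b * (Rseq a b xy r).1) - (Rseq a b xy r).2)

lemma Rseq_fst_rec (a b : ℝ) (xy : ℝ × ℝ) (r : ℕ) :
    (Rseq a b xy (r+2)).1 = (a*b-2) * (Rseq a b xy (r+1)).1 - (Rseq a b xy r).1 := by
  simp [Rseq]; ring

lemma Rseq_snd_rec (a b : ℝ) (xy : ℝ × ℝ) (r : ℕ) :
    (Rseq a b xy (r+2)).2 = (a*b-2) * (Rseq a b xy (r+1)).2 - (Rseq a b xy r).2 := by
  simp [Rseq]; ring

/-- Closed form of a Chebyshev-type recurrence. -/
lemma sin_rec (φ : ℝ) (Z : ℕ → ℝ) (h : ∀ r, Z (r+2) = 2 * Real.cos φ * Z (r+1) - Z r) :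
    ∀ r : ℕ, Z r * Real.sin φ =
      Z 0 * (Real.cos (r * φ) * Real.sin φ) + (Z 1 - Z 0 * Real.cos φ) * Real.sin (r * φ) := by
  intro r
  induction r using Nat.twoStepInduction with
  | zero => simp
  | one => push_cast; rw [one_mul]; ring
  | more r ih1 ih2 =>
    have e2 : ((r : ℝ) + 2) * φ = ((r : ℝ) + 1) * φ + φ := by ring
    have e0 : (r : ℝ) * φ = ((r : ℝ) + 1) * φ - φ := by ring
    push_cast at ih2 ⊢
    rw [e0, Real.cos_sub, Real.sin_sub] at ih1
    rw [h r, e2, Real.cos_add, Real.sin_add]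
    linear_combination 2 * Real.cos φ * ih2 - ih1

lemma seq_period (K : ℕ) (hK : 3 ≤ K) (Z : ℕ → ℝ)
    (h : ∀ r, Z (r+2) = (4 * Real.cos (π / K) ^ 2 - 2) * Z (r+1) - Z r) : Z K = Z 0 := by
  set φ := 2 * (π / K) with hφ
  have hKR : (0:ℝ) < K := by positivity
  have hrec : ∀ r, Z (r+2) = 2 * Real.cos φ * Z (r+1) - Z r := by
    intro r
    rw [h r, hφ, Real.cos_two_mul]
    ring_nf
  have hsin : 0 < Real.sin φ := by
    apply Real.sin_pos_of_pos_of_lt_pi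
    · positivity
    · have h3 : (3:ℝ) ≤ K := by exact_mod_cast hK
      rw [hφ, show 2*(π/(K:ℝ)) = 2*π/K by ring, div_lt_iff₀ hKR]
      nlinarith [Real.pi_pos]
  have hKφ : (K:ℝ) * φ = 2 * π := by
    rw [hφ]; field_simp
  have := sin_rec φ Z hrec K
  rw [hKφ] at this
  rw [Real.cos_two_pi, Real.sin_two_pi] at this
  have h2 : Z K * Real.sin φ = Z 0 * Real.sin φ := by rw [this]; ring
  exact mul_right_cancel₀ (ne_of_gt hsin) h2

lemma seq_mono (c : ℝ) (hc : 4 ≤ c) (Z : ℕ → ℝ)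
    (h : ∀ r, Z (r+2) = (c - 2) * Z (r+1) - Z r) (h0 : 0 ≤ Z 0) (h01 : Z 0 ≤ Z 1) :
    ∀ r, 0 ≤ Z r ∧ Z r ≤ Z (r+1) := by
  intro r
  induction r with
  | zero => exact ⟨h0, h01⟩
  | succ r ih =>
    obtain ⟨h1, h2⟩ := ih
    have h3 : 0 ≤ Z (r+1) := le_trans h1 h2
    refine ⟨h3, ?_⟩
    rw [h r]
    nlinarith

variable {n : ℕ} (M : Matrix (Fin n) (Fin n) ℝ)

lemma reflLin_apply (i : Fin n) (v : Fin n → ℝ) :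
    reflLin M i v = v - (∑ j, M i j * v j) • (Pi.single i 1 : Fin n → ℝ) := rfl

lemma sum_mul_single (i k : Fin n) :
    ∑ j, M i j * (Pi.single k (1:ℝ) : Fin n → ℝ) j = M i k := by
  simp [Pi.single_apply, mul_ite, Finset.sum_ite_eq']

lemma reflLin_single (i k : Fin n) :
    reflLin M i (Pi.single k 1) =
      (Pi.single k 1 : Fin n → ℝ) - (M i k) • (Pi.single i 1 : Fin n → ℝ) := by
  rw [reflLin_apply, sum_mul_single]

lemma reflLin_fixed {i : Fin n} {v : Fin n → ℝ} (h : ∑ j, M i j * v j = 0) :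
    reflLin M i v = v := by
  rw [reflLin_apply, h]; simp

lemma sum_combo (i : Fin n) (v : Fin n → ℝ) (c d : ℝ) (k l : Fin n) :
    ∑ t, M i t * (v + c • (Pi.single k 1 : Fin n → ℝ) + d • (Pi.single l 1 : Fin n → ℝ)) t
      = (∑ t, M i t * v t) + c * M i k + d * M i l := by
  calc ∑ t, M i t * (v + c • (Pi.single k 1 : Fin n → ℝ) + d • (Pi.single l 1 : Fin n → ℝ)) t
      = ∑ t, (M i t * v t + c * (M i t * (Pi.single k 1 : Fin n → ℝ) t)
          + d * (M i t * (Pi.single l 1 : Fin n → ℝ) t)) := by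
        apply Finset.sum_congr rfl; intro t _
        simp only [Pi.add_apply, Pi.smul_apply, smul_eq_mul]; ring
    _ = (∑ t, M i t * v t) + c * (∑ t, M i t * (Pi.single k 1 : Fin n → ℝ) t)
          + d * (∑ t, M i t * (Pi.single l 1 : Fin n → ℝ) t) := by
        rw [Finset.sum_add_distrib, Finset.sum_add_distrib, ← Finset.mul_sum, ← Finset.mul_sum]
    _ = (∑ t, M i t * v t) + c * M i k + d * M i l := by
        rw [sum_mul_single, sum_mul_single]

lemma reflLin_invol (i : Fin n) (h2 : M i i = 2) : reflLin M i * reflLin M i = 1 := by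
  apply LinearMap.ext; intro v
  rw [Module.End.mul_apply, Module.End.one_apply]
  set c := ∑ j, M i j * v j with hc
  have hs : reflLin M i v = v + (-c) • (Pi.single i 1 : Fin n → ℝ) + (0:ℝ) • (Pi.single i 1 : Fin n → ℝ) := by
    rw [reflLin_apply, ← hc]; module
  rw [hs]
  rw [reflLin_apply, sum_combo M i v (-c) 0 i i, ← hc, h2]
  ring_nf
  module

variable (K : CoxeterMatrix (Fin n))

lemma pow_single (hMK : IsEGCM M K) (i j : Fin n) (hij : i ≠ j) :
    ∀ (xy : ℝ × ℝ) (r : ℕ),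
      ((reflLin M i * reflLin M j) ^ r)
          (xy.1 • (Pi.single i 1 : Fin n → ℝ) + xy.2 • (Pi.single j 1 : Fin n → ℝ))
        = (Rseq (M i j) (M j i) xy r).1 • (Pi.single i 1 : Fin n → ℝ)
          + (Rseq (M i j) (M j i) xy r).2 • (Pi.single j 1 : Fin n → ℝ) := by
  intro xy r
  induction r with
  | zero => rw [pow_zero, Module.End.one_apply]; rfl
  | succ r ih =>
    rw [pow_succ', Module.End.mul_apply, ih, Module.End.mul_apply]
    simp only [map_add, map_smul, map_sub, reflLin_single]
    rw [hMK.1 i, hMK.1 j]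
    show _ = (Rseq (M i j) (M j i) xy (r+1)).1 • (Pi.single i 1 : Fin n → ℝ)
          + (Rseq (M i j) (M j i) xy (r+1)).2 • (Pi.single j 1 : Fin n → ℝ)
    simp only [Rseq]
    module

lemma Rseq_period (hMK : IsEGCM M K) (i j : Fin n) (hij : i ≠ j) (hK2 : 2 ≤ K i j)
    (hcos : M i j * M j i = 4 * Real.cos (π / (K i j : ℝ)) ^ 2) (xy : ℝ × ℝ) :
    Rseq (M i j) (M j i) xy (K i j) = xy := by
  rcases eq_or_lt_of_le hK2 with h2 | h3
  · -- K i j = 2 : cos (π/2) = 0, so M i j * M j i = 0, hence both are zero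
    have hc0 : M i j * M j i = 0 := by
      rw [hcos, ← h2]
      norm_num [Real.cos_pi_div_two]
    have ha : M i j = 0 := by
      rcases mul_eq_zero.mp hc0 with h | h
      · exact h
      · exact (hMK.2.2.1 i j).mpr h
    have hb : M j i = 0 := (hMK.2.2.1 i j).mp ha
    rw [← h2]
    simp [Rseq, ha, hb]
  · have hK3 : 3 ≤ K i j := h3
    have hrecX : ∀ r, (Rseq (M i j) (M j i) xy (r+2)).1
        = (4 * Real.cos (π / (K i j : ℝ)) ^ 2 - 2) * (Rseq (M i j) (M j i) xy (r+1)).1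
          - (Rseq (M i j) (M j i) xy r).1 := fun r => by rw [Rseq_fst_rec, hcos]
    have hrecY : ∀ r, (Rseq (M i j) (M j i) xy (r+2)).2
        = (4 * Real.cos (π / (K i j : ℝ)) ^ 2 - 2) * (Rseq (M i j) (M j i) xy (r+1)).2
          - (Rseq (M i j) (M j i) xy r).2 := fun r => by rw [Rseq_snd_rec, hcos]
    have hfst := seq_period (K i j) hK3 (fun r => (Rseq (M i j) (M j i) xy r).1) hrecX
    have hsnd := seq_period (K i j) hK3 (fun r => (Rseq (M i j) (M j i) xy r).2) hrecY
    exact Prod.ext hfst hsnd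

lemma isLiftable (hMK : IsEGCM M K) : K.IsLiftable (fun i => reflLin M i) := by
  intro i j
  by_cases hij : i = j
  · subst hij
    rw [K.diagonal i, pow_one]
    exact reflLin_invol M i (hMK.1 i)
  · rcases hMK.2.2.2 i j hij with ⟨hK0, _⟩ | ⟨hK2, hcos⟩
    · rw [hK0, pow_zero]
    · -- finite order case
      apply LinearMap.ext; intro v
      rw [Module.End.one_apply]
      set a := M i j with hadef
      set b := M j i with hbdef
      have hab : a * b = 4 * Real.cos (π / (K i j : ℝ)) ^ 2 := hcos
      have hd : (4:ℝ) - a * b ≠ 0 := by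
        have hKR : (2:ℝ) ≤ (K i j : ℝ) := by exact_mod_cast hK2
        have h1 : 0 < π / (K i j : ℝ) := by positivity
        have h2 : π / (K i j : ℝ) ≤ π / 2 :=
          div_le_div_of_nonneg_left Real.pi_pos.le two_pos hKR
        have h3 : Real.cos (π / (K i j : ℝ)) < 1 := by
          have := Real.cos_lt_cos_of_nonneg_of_le_pi (le_refl 0) (by linarith [Real.pi_pos]) h1
          simpa using this
        have h4 : 0 ≤ Real.cos (π / (K i j : ℝ)) :=
          Real.cos_nonneg_of_mem_Icc ⟨by linarith, h2⟩
        rw [hab]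
        nlinarith
      set F := ∑ t, M i t * v t with hF
      set G := ∑ t, M j t * v t with hG
      set sc := (2*F - a*G)/(4 - a*b) with hsc
      set tc := (2*G - b*F)/(4 - a*b) with htc
      set u := v + (-sc) • (Pi.single i 1 : Fin n → ℝ) + (-tc) • (Pi.single j 1 : Fin n → ℝ)
        with hu
      have hFu : ∑ t, M i t * u t = 0 := by
        rw [hu, sum_combo, ← hF, hMK.1 i, ← hadef, hsc, htc]
        field_simp
        ring
      have hGu : ∑ t, M j t * u t = 0 := by
        rw [hu, sum_combo, ← hG, hMK.1 j, ← hbdef, hsc, htc]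
        field_simp
        ring
      have hufix : ((reflLin M i * reflLin M j) ^ (K i j)) u = u := by
        have h1 : (reflLin M i * reflLin M j) u = u := by
          rw [Module.End.mul_apply, reflLin_fixed M hGu, reflLin_fixed M hFu]
        rw [Module.End.pow_apply]
        exact Function.iterate_fixed h1 _
      have hv : v = u + (sc • (Pi.single i 1 : Fin n → ℝ) + tc • (Pi.single j 1 : Fin n → ℝ)) := by
        rw [hu]; module
      have hsing := pow_single M K hMK i j hij (sc, tc) (K i j)
      rw [Rseq_period M K hMK i j hij hK2 hcos (sc, tc)] at hsing
      have hsing' : ((reflLin M i * reflLin M j) ^ K i j)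
          (sc • (Pi.single i 1 : Fin n → ℝ) + tc • (Pi.single j 1 : Fin n → ℝ))
          = sc • (Pi.single i 1 : Fin n → ℝ) + tc • (Pi.single j 1 : Fin n → ℝ) := hsing
      rw [hv, map_add, hufix, hsing']

/-- Coefficients of the image of `α_i` under products of alternating words. -/
def PQ (a b : ℝ) : ℕ → ℝ × ℝ
  | 0 => (1, 0)
  | m+1 => if Even m then ((PQ a b m).1, -(b * (PQ a b m).1) - (PQ a b m).2)
           else (-(PQ a b m).1 - a * (PQ a b m).2, (PQ a b m).2)

lemma Rseq_succ_snd (a b : ℝ) (xy : ℝ × ℝ) (r : ℕ) :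
    (Rseq a b xy (r+1)).2 = -(b * (Rseq a b xy r).1) - (Rseq a b xy r).2 := rfl

lemma PQ_even (a b : ℝ) : ∀ r : ℕ, PQ a b (2*r) = Rseq a b (1,0) r := by
  intro r
  induction r with
  | zero => rfl
  | succ r ih =>
    have h1 : 2*(r+1) = (2*r+1)+1 := by ring
    rw [h1]
    have he : Even (2*r) := even_two_mul r
    have ho : ¬ Even (2*r+1) := by simp [Nat.even_add_one, he]
    show PQ a b ((2*r+1)+1) = _
    rw [PQ, if_neg ho, PQ, if_pos he, ih]
    show _ = ((a*b-1) * (Rseq a b (1,0) r).1 + a * (Rseq a b (1,0) r).2,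
            -(b * (Rseq a b (1,0) r).1) - (Rseq a b (1,0) r).2)
    apply Prod.ext
    · show -(Rseq a b (1,0) r).1 - a * (-(b * (Rseq a b (1,0) r).1) - (Rseq a b (1,0) r).2) = _
      ring
    · rfl

lemma PQ_odd (a b : ℝ) (r : ℕ) :
    PQ a b (2*r+1) = ((Rseq a b (1,0) r).1,
      -(b * (Rseq a b (1,0) r).1) - (Rseq a b (1,0) r).2) := by
  have he : Even (2*r) := even_two_mul r
  rw [PQ, if_pos he, PQ_even]

lemma Rseq_comp_nonneg (K0 : ℕ) (a b : ℝ) (hb : b ≤ 0) (hK3 : 3 ≤ K0)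
    (hcos : a * b = 4 * Real.cos (π / (K0 : ℝ)) ^ 2) :
    (∀ r, 2*r+1 ≤ K0 → 0 ≤ (Rseq a b (1,0) r).1) ∧
      (∀ r, 2*r ≤ K0 → 0 ≤ (Rseq a b (1,0) r).2) := by
  set θ := π / (K0 : ℝ) with hθ
  set φ := 2 * θ with hφ
  have hKR : (3:ℝ) ≤ (K0:ℝ) := by exact_mod_cast hK3
  have hKpos : (0:ℝ) < K0 := by linarith
  have hθpos : 0 < θ := by rw [hθ]; positivity
  have hθle : θ ≤ π / 3 := by
    rw [hθ]
    exact div_le_div_of_nonneg_left Real.pi_pos.le (by norm_num) hKR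
  have hcosθ : 0 ≤ Real.cos θ := by
    apply Real.cos_nonneg_of_mem_Icc
    constructor <;> nlinarith [Real.pi_pos]
  have hsinφ : 0 < Real.sin φ := by
    apply Real.sin_pos_of_pos_of_lt_pi
    · rw [hφ]; linarith
    · rw [hφ, hθ]
      rw [show 2 * (π / (K0:ℝ)) = 2*π/K0 by ring, div_lt_iff₀ hKpos]
      nlinarith [Real.pi_pos]
  have hcoeff : a * b - 2 = 2 * Real.cos φ := by
    rw [hcos, hφ, Real.cos_two_mul]; ring
  have hsin_arg : ∀ r : ℕ, 2*r ≤ K0 → 0 ≤ Real.sin ((r:ℝ) * φ) := by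
    intro r hr
    apply Real.sin_nonneg_of_nonneg_of_le_pi
    · have : (0:ℝ) ≤ (r:ℝ) := Nat.cast_nonneg r
      positivity
    · have hr' : (2*(r:ℝ)) ≤ K0 := by exact_mod_cast hr
      rw [hφ, hθ]
      rw [show (r:ℝ) * (2 * (π/(K0:ℝ))) = (2*r) * π / K0 by ring, div_le_iff₀ hKpos]
      nlinarith [Real.pi_pos]
  constructor
  · intro r hr
    have hrecX : ∀ r', (Rseq a b (1,0) (r'+2)).1
        = 2 * Real.cos φ * (Rseq a b (1,0) (r'+1)).1 - (Rseq a b (1,0) r').1 :=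
      fun r' => by rw [Rseq_fst_rec, hcoeff]
    have hform := sin_rec φ (fun r' => (Rseq a b (1,0) r').1) hrecX r
    have h0 : (Rseq a b (1,0) 0).1 = 1 := rfl
    have h1 : (Rseq a b (1,0) 1).1 = a*b - 1 := by
      show (a*b-1) * 1 + a * 0 = a*b - 1; ring
    simp only [h0, h1] at hform
    have hkey : (Rseq a b (1,0) r).1 * Real.sin φ
        = 2 * Real.cos θ * Real.sin ((r:ℝ) * φ + θ) := by
      rw [hform, hcos, Real.sin_add, hφ, Real.sin_two_mul, Real.cos_two_mul]
      ring
    have hsinarg : 0 ≤ Real.sin ((r:ℝ) * φ + θ) := by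
      apply Real.sin_nonneg_of_nonneg_of_le_pi
      · have : (0:ℝ) ≤ (r:ℝ) := Nat.cast_nonneg r
        nlinarith
      · have hr' : (2*(r:ℝ)+1) ≤ K0 := by exact_mod_cast hr
        rw [hφ, hθ]
        rw [show (r:ℝ) * (2 * (π/(K0:ℝ))) + π/K0 = (2*r+1) * π / K0 by ring,
          div_le_iff₀ hKpos]
        nlinarith [Real.pi_pos]
    nlinarith
  · intro r hr
    have hrecY : ∀ r', (Rseq a b (1,0) (r'+2)).2
        = 2 * Real.cos φ * (Rseq a b (1,0) (r'+1)).2 - (Rseq a b (1,0) r').2 :=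
      fun r' => by rw [Rseq_snd_rec, hcoeff]
    have hform := sin_rec φ (fun r' => (Rseq a b (1,0) r').2) hrecY r
    have h0 : (Rseq a b (1,0) 0).2 = 0 := rfl
    have h1 : (Rseq a b (1,0) 1).2 = -b := by
      show -(b * 1) - 0 = -b; ring
    simp only [h0, h1] at hform
    have hkey : (Rseq a b (1,0) r).2 * Real.sin φ = -b * Real.sin ((r:ℝ) * φ) := by
      rw [hform]; ring
    have := hsin_arg r hr
    nlinarith

lemma PQ_nonneg (K0 : ℕ) (a b : ℝ) (ha : a ≤ 0) (hb : b ≤ 0)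
    (hK : (K0 = 0 ∧ 4 ≤ a*b) ∨ (2 ≤ K0 ∧ a*b = 4*Real.cos (π / (K0:ℝ))^2))
    (m : ℕ) (hm : K0 = 0 ∨ m + 1 ≤ K0) :
    0 ≤ (PQ a b m).1 ∧ 0 ≤ (PQ a b m).2 := by
  have hX0 : (Rseq a b (1,0) 0).1 = 1 := rfl
  have hX1 : (Rseq a b (1,0) 1).1 = a*b - 1 := by
    show (a*b-1) * 1 + a * 0 = a*b - 1; ring
  have hY0 : (Rseq a b (1,0) 0).2 = 0 := rfl
  have hY1 : (Rseq a b (1,0) 1).2 = -b := by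
    show -(b * 1) - 0 = -b; ring
  rcases hK with ⟨hK0, hc4⟩ | ⟨hK2, hcos⟩
  · -- infinite order: monotone growth
    have hrecX : ∀ r', (Rseq a b (1,0) (r'+2)).1
        = (a*b - 2) * (Rseq a b (1,0) (r'+1)).1 - (Rseq a b (1,0) r').1 :=
      fun r' => Rseq_fst_rec a b (1,0) r'
    have hrecY : ∀ r', (Rseq a b (1,0) (r'+2)).2
        = (a*b - 2) * (Rseq a b (1,0) (r'+1)).2 - (Rseq a b (1,0) r').2 :=
      fun r' => Rseq_snd_rec a b (1,0) r'
    have hX := seq_mono (a*b) hc4 (fun r' => (Rseq a b (1,0) r').1) hrecX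
      (by show (0:ℝ) ≤ (Rseq a b (1,0) 0).1; rw [hX0]; norm_num)
      (by show (Rseq a b (1,0) 0).1 ≤ (Rseq a b (1,0) 1).1; rw [hX0, hX1]; nlinarith)
    have hY := seq_mono (a*b) hc4 (fun r' => (Rseq a b (1,0) r').2) hrecY
      (by show (0:ℝ) ≤ (Rseq a b (1,0) 0).2; rw [hY0])
      (by show (Rseq a b (1,0) 0).2 ≤ (Rseq a b (1,0) 1).2; rw [hY0, hY1]; linarith)
    rcases Nat.even_or_odd m with ⟨r, hr⟩ | ⟨r, hr⟩
    · rw [hr, ← two_mul, PQ_even]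
      exact ⟨(hX r).1, (hY r).1⟩
    · rw [hr, PQ_odd]
      refine ⟨(hX r).1, ?_⟩
      rw [← Rseq_succ_snd]
      exact (hY (r+1)).1
  · have hm' : m + 1 ≤ K0 := by
      rcases hm with h | h
      · omega
      · exact h
    rcases eq_or_lt_of_le hK2 with h2 | h3
    · -- K0 = 2, so m ≤ 1
      have hm1 : m ≤ 1 := by omega
      interval_cases m
      · exact ⟨by norm_num [PQ], by norm_num [PQ]⟩
      · have : PQ a b 1 = (1, -b) := by
          rw [show (1:ℕ) = 2*0+1 by norm_num, PQ_odd]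
          rw [hX0, hY0]
          norm_num
        rw [this]
        constructor
        · norm_num
        · dsimp only
          linarith
    · have hK3 : 3 ≤ K0 := h3
      obtain ⟨hXpos, hYpos⟩ := Rseq_comp_nonneg K0 a b hb hK3 hcos
      rcases Nat.even_or_odd m with ⟨r, hr⟩ | ⟨r, hr⟩
      · have hrm : m = 2*r := by omega
        rw [hrm, PQ_even]
        exact ⟨hXpos r (by omega), hYpos r (by omega)⟩
      · rw [hr, PQ_odd]
        refine ⟨hXpos r (by omega), ?_⟩
        rw [← Rseq_succ_snd]
        exact hYpos (r+1) (by omega)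

open CoxeterSystem in
lemma exists_decomp {W : Type*} [Group W] (cs : CoxeterSystem K W) (i j : Fin n) :
    ∀ (fuel : ℕ) (u : W), cs.length u ≤ fuel → ∀ m : ℕ, 1 ≤ m →
      cs.length (u * cs.wordProd (alternatingWord i j m)) = cs.length u + m →
      ∃ u' m', 1 ≤ m' ∧
        u * cs.wordProd (alternatingWord i j m)
          = u' * cs.wordProd (alternatingWord i j m') ∧
        cs.length (u * cs.wordProd (alternatingWord i j m)) = cs.length u' + m' ∧
        ¬ cs.IsRightDescent u' i ∧ ¬ cs.IsRightDescent u' j := by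
  intro fuel
  induction fuel with
  | zero =>
    intro u hu m hm hlen
    have hu1 : u = 1 := cs.length_eq_zero_iff.mp (Nat.le_zero.mp hu)
    subst hu1
    exact ⟨1, m, hm, rfl, hlen, cs.not_isRightDescent_one _, cs.not_isRightDescent_one _⟩
  | succ fuel ih =>
    intro u hu m hm hlen
    by_cases hdc : cs.IsRightDescent u (if Even m then j else i)
    · -- absorb the letter and recurse
      set c := if Even m then j else i with hc
      have hlc : cs.length (u * cs.simple c) + 1 = cs.length u := cs.isRightDescent_iff.mp hdc
      have hprod : (u * cs.simple c) * cs.wordProd (alternatingWord i j (m+1))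
          = u * cs.wordProd (alternatingWord i j m) := by
        rw [alternatingWord_succ', cs.wordProd_cons, ← hc, mul_assoc,
          cs.simple_mul_simple_cancel_left]
      have hlen' : cs.length ((u * cs.simple c) * cs.wordProd (alternatingWord i j (m+1)))
          = cs.length (u * cs.simple c) + (m+1) := by
        rw [hprod, hlen]; omega
      obtain ⟨u', m', h1, h2, h3, h4, h5⟩ :=
        ih (u * cs.simple c) (by omega) (m+1) (by omega) hlen'
      exact ⟨u', m', h1, by rw [← hprod]; exact h2, by rw [← hprod]; exact h3, h4, h5⟩
    · -- both letters are ascents: stop here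
      have hkey : ¬ cs.IsRightDescent u (if Even m then i else j) := by
        intro hd
        obtain ⟨m0, rfl⟩ : ∃ m0, m = m0 + 1 := ⟨m-1, by omega⟩
        have hc' : (if Even (m0+1) then i else j) = if Even m0 then j else i := by
          rcases Nat.even_or_odd m0 with he | ho
          · simp [he, Nat.even_add_one]
          · simp [Nat.not_even_iff_odd.mpr ho, Nat.even_add_one]
        rw [hc'] at hd
        have hsplit : u * cs.wordProd (alternatingWord i j (m0+1))
            = (u * cs.simple (if Even m0 then j else i)) * cs.wordProd (alternatingWord i j m0) := by
          rw [alternatingWord_succ', cs.wordProd_cons, ← mul_assoc]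
        have hld : cs.length (u * cs.simple (if Even m0 then j else i)) + 1 = cs.length u :=
          cs.isRightDescent_iff.mp hd
        have hb1 : cs.length (u * cs.wordProd (alternatingWord i j (m0+1)))
            ≤ cs.length (u * cs.simple (if Even m0 then j else i))
              + cs.length (cs.wordProd (alternatingWord i j m0)) := by
          rw [hsplit]; exact cs.length_mul_le _ _
        have hb2 : cs.length (cs.wordProd (alternatingWord i j m0)) ≤ m0 := by
          have := cs.length_wordProd_le (alternatingWord i j m0)
          rwa [length_alternatingWord] at this
        omega
      rcases Nat.even_or_odd m with he | ho
      · rw [if_pos he] at hdc hkey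
        exact ⟨u, m, hm, rfl, hlen, hkey, hdc⟩
      · rw [if_neg (Nat.not_even_iff_odd.mpr ho)] at hdc hkey
        exact ⟨u, m, hm, rfl, hlen, hdc, hkey⟩

open CoxeterSystem in
lemma alt_vec {W : Type*} [Group W] (cs : CoxeterSystem K W)
    (ρ : W →* Module.End ℝ (Fin n → ℝ)) (hMK : IsEGCM M K)
    (hρ : ∀ t, ρ (cs.simple t) = reflLin M t) (i j : Fin n) :
    ∀ m : ℕ, ρ (cs.wordProd (alternatingWord i j m)) (Pi.single i 1)
      = (PQ (M i j) (M j i) m).1 • (Pi.single i 1 : Fin n → ℝ)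
        + (PQ (M i j) (M j i) m).2 • (Pi.single j 1 : Fin n → ℝ) := by
  intro m
  induction m with
  | zero =>
    rw [show alternatingWord i j 0 = ([] : List (Fin n)) from rfl, cs.wordProd_nil,
      map_one, Module.End.one_apply]
    show (Pi.single i 1 : Fin n → ℝ)
      = (1:ℝ) • (Pi.single i 1 : Fin n → ℝ) + (0:ℝ) • (Pi.single j 1 : Fin n → ℝ)
    module
  | succ m ih =>
    rw [alternatingWord_succ', cs.wordProd_cons, map_mul, Module.End.mul_apply, ih]
    by_cases hm : Even m
    · rw [if_pos hm, hρ j, map_add, map_smul, map_smul, reflLin_single, reflLin_single,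
        hMK.1 j]
      show _ = (PQ (M i j) (M j i) (m+1)).1 • (Pi.single i 1 : Fin n → ℝ)
          + (PQ (M i j) (M j i) (m+1)).2 • (Pi.single j 1 : Fin n → ℝ)
      rw [PQ, if_pos hm]
      module
    · rw [if_neg hm, hρ i, map_add, map_smul, map_smul, reflLin_single, reflLin_single,
        hMK.1 i]
      show _ = (PQ (M i j) (M j i) (m+1)).1 • (Pi.single i 1 : Fin n → ℝ)
          + (PQ (M i j) (M j i) (m+1)).2 • (Pi.single j 1 : Fin n → ℝ)
      rw [PQ, if_neg hm]
      module

open CoxeterSystem in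
lemma dihedral {W : Type*} [Group W] (cs : CoxeterSystem K W)
    (ρ : W →* Module.End ℝ (Fin n → ℝ)) (hMK : IsEGCM M K)
    (hρ : ∀ t, ρ (cs.simple t) = reflLin M t) (i j : Fin n) (hij : i ≠ j) (m : ℕ)
    (hm : K i j = 0 ∨ m + 1 ≤ K i j) :
    ∃ p q : ℝ, 0 ≤ p ∧ 0 ≤ q ∧
      ρ (cs.wordProd (alternatingWord i j m)) (Pi.single i 1)
        = p • (Pi.single i 1 : Fin n → ℝ) + q • (Pi.single j 1 : Fin n → ℝ) := by
  obtain ⟨h1, h2⟩ := PQ_nonneg (K i j) (M i j) (M j i) (hMK.2.1 i j hij)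
    (hMK.2.1 j i (Ne.symm hij)) (hMK.2.2.2 i j hij) m hm
  exact ⟨_, _, h1, h2, alt_vec M K cs ρ hMK hρ i j m⟩

lemma single_nonneg' (i : Fin n) (t : Fin n) : 0 ≤ (Pi.single i 1 : Fin n → ℝ) t := by
  rw [Pi.single_apply]
  split <;> norm_num

open CoxeterSystem in
lemma rho_pos {W : Type*} [Group W] (cs : CoxeterSystem K W)
    (ρ : W →* Module.End ℝ (Fin n → ℝ)) (hMK : IsEGCM M K)
    (hρ : ∀ t, ρ (cs.simple t) = reflLin M t) :
    ∀ (N : ℕ) (w : W), cs.length w ≤ N → ∀ i : Fin n, ¬ cs.IsRightDescent w i →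
      ∀ t, 0 ≤ ρ w (Pi.single i 1) t := by
  intro N
  induction N with
  | zero =>
    intro w hw i _ t
    have hw1 : w = 1 := cs.length_eq_zero_iff.mp (Nat.le_zero.mp hw)
    rw [hw1, map_one, Module.End.one_apply]
    exact single_nonneg' i t
  | succ N ihN =>
    intro w hw i hasc t
    by_cases hw1 : w = 1
    · rw [hw1, map_one, Module.End.one_apply]
      exact single_nonneg' i t
    · obtain ⟨j, hdj⟩ := cs.exists_rightDescent_of_ne_one hw1
      have hij : j ≠ i := by rintro rfl; exact hasc hdj
      have halt1 : alternatingWord i j 1 = [j] := rfl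
      have hl0 : cs.length (w * cs.simple j) + 1 = cs.length w := cs.isRightDescent_iff.mp hdj
      have hini : cs.length ((w * cs.simple j) * cs.wordProd (alternatingWord i j 1))
          = cs.length (w * cs.simple j) + 1 := by
        rw [halt1, cs.wordProd_singleton, cs.simple_mul_simple_cancel_right]
        omega
      obtain ⟨u', m', hm1, heq, hlen', hnd_i, hnd_j⟩ :=
        exists_decomp K cs i j (cs.length (w * cs.simple j)) (w * cs.simple j) le_rfl
          1 le_rfl hini
      rw [halt1, cs.wordProd_singleton, cs.simple_mul_simple_cancel_right] at heq hlen'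
      have hu'N : cs.length u' ≤ N := by omega
      set x := cs.wordProd (alternatingWord i j m') with hx
      have hxle : cs.length x ≤ m' := by
        have := cs.length_wordProd_le (alternatingWord i j m')
        rwa [length_alternatingWord] at this
      have hxge : m' ≤ cs.length x := by
        have h1 : cs.length w ≤ cs.length u' + cs.length x := by
          rw [heq]; exact cs.length_mul_le _ _
        omega
      have hup : cs.length (w * cs.simple i) = cs.length w + 1 :=
        cs.not_isRightDescent_iff.mp hasc
      have hxsi : cs.length (x * cs.simple i) = m' + 1 := by
        have h1 : cs.length (w * cs.simple i) ≤ cs.length u' + cs.length (x * cs.simple i) := by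
          rw [heq, mul_assoc]; exact cs.length_mul_le _ _
        have h2 : cs.length (x * cs.simple i) ≤ cs.length x + cs.length (cs.simple i) :=
          cs.length_mul_le _ _
        rw [cs.length_simple] at h2
        omega
      have hKm : K i j = 0 ∨ m' + 1 ≤ K i j := by
        by_cases hK0 : K i j = 0
        · exact Or.inl hK0
        · right
          by_contra hgt
          push_neg at hgt
          have hred : cs.IsReduced (alternatingWord j i (m'+1)) := by
            unfold CoxeterSystem.IsReduced
            rw [alternatingWord_succ, cs.wordProd_concat, List.length_concat,
              length_alternatingWord, ← hx]
            exact hxsi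
          have hKji : K j i ≠ 0 := by
            rwa [K.isSymm.apply i j]
          exact cs.not_isReduced_alternatingWord j i hKji
            (by rw [K.isSymm.apply i j]; omega) hred
      obtain ⟨p, q, hp, hq, hvec⟩ :=
        dihedral M K cs ρ hMK hρ i j (Ne.symm hij) m' hKm
      rw [heq, map_mul, Module.End.mul_apply, hx, hvec, map_add, map_smul, map_smul]
      have h1 := ihN u' hu'N i hnd_i t
      have h2 := ihN u' hu'N j hnd_j t
      simp only [Pi.add_apply, Pi.smul_apply, smul_eq_mul]
      exact add_nonneg (mul_nonneg hp h1) (mul_nonneg hq h2)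


lemma sum_mul_single' (v : Fin n → ℝ) (c : Fin n) :
    ∑ u, v u * (Pi.single c 1 : Fin n → ℝ) u = v c := by
  simp [Pi.single_apply, mul_ite, Finset.sum_ite_eq']

lemma eq_sum_single (v : Fin n → ℝ) : v = ∑ t, v t • (Pi.single t 1 : Fin n → ℝ) := by
  funext u
  rw [Finset.sum_apply]
  simp [Pi.single_apply, mul_ite, Finset.sum_ite_eq]

lemma play_append (l1 l2 : List (Fin n)) (lam : Fin n → ℝ) :
    play M lam (l1 ++ l2) = play M (play M lam l1) l2 := by
  induction l1 generalizing lam with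
  | nil => rfl
  | cons c r ih => exact ih (fire M lam c)

lemma play_apply {W : Type*} [Group W] (cs : CoxeterSystem K W)
    (ρ : W →* Module.End ℝ (Fin n → ℝ))
    (hρ : ∀ t, ρ (cs.simple t) = reflLin M t) :
    ∀ (seq : List (Fin n)) (lam : Fin n → ℝ) (t : Fin n),
      play M lam seq t = ∑ u, lam u * (ρ (cs.wordProd seq) (Pi.single t 1)) u := by
  intro seq
  induction seq with
  | nil =>
    intro lam t
    rw [cs.wordProd_nil, map_one, Module.End.one_apply]
    exact (sum_mul_single' lam t).symm
  | cons c rest ih =>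
    intro lam t
    show play M (fire M lam c) rest t = _
    rw [ih, cs.wordProd_cons, map_mul, Module.End.mul_apply, hρ]
    set v := ρ (cs.wordProd rest) (Pi.single t 1) with hv
    rw [reflLin_apply]
    have hL : ∑ u, fire M lam c u * v u
        = (∑ u, lam u * v u) - lam c * (∑ u, M c u * v u) := by
      calc ∑ u, fire M lam c u * v u
          = ∑ u, (lam u * v u - lam c * (M c u * v u)) := by
            apply Finset.sum_congr rfl; intro u _
            show (lam u - M c u * lam c) * v u = _
            ring
        _ = _ := by
            rw [Finset.sum_sub_distrib, ← Finset.mul_sum]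
    have hR : ∑ u, lam u * (v - (∑ j, M c j * v j) • (Pi.single c 1 : Fin n → ℝ)) u
        = (∑ u, lam u * v u) - (∑ j, M c j * v j) * lam c := by
      calc ∑ u, lam u * (v - (∑ j, M c j * v j) • (Pi.single c 1 : Fin n → ℝ)) u
          = ∑ u, (lam u * v u
              - (∑ j, M c j * v j) * (lam u * (Pi.single c 1 : Fin n → ℝ) u)) := by
            apply Finset.sum_congr rfl; intro u _
            simp only [Pi.sub_apply, Pi.smul_apply, smul_eq_mul]
            ring
        _ = (∑ u, lam u * v u)
              - (∑ j, M c j * v j) * ∑ u, lam u * (Pi.single c 1 : Fin n → ℝ) u := by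
            rw [Finset.sum_sub_distrib, ← Finset.mul_sum]
        _ = _ := by rw [sum_mul_single']
    rw [hL, hR]
    ring

end NumbersGame

/-- Let `J` be a set of nodes whose parabolic subgroup `W_J` is finite, and let `λ` be a
position with `λ_i > 0` for `i ∉ J` and `λ_j = 0` for `j ∈ J`. If `s_{i_p}⋯s_{i_2}s_{i_1}`
is a reduced expression of an element of the set `W^J` of minimal coset representatives
(encoded as the word `ω = [i_p, …, i_1]`), then `(i_1, …, i_p)`, i.e. `ω.reverse`, is a
legal firing sequence for the numbers game from `λ`. -/
theorem minimal_coset_firing {n : ℕ} {W : Type*} [Group W]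
    (M : Matrix (Fin n) (Fin n) ℝ) (K : CoxeterMatrix (Fin n)) (hMK : IsEGCM M K)
    (cs : CoxeterSystem K W)
    (J : Set (Fin n))
    (hWJ : ((Subgroup.closure (cs.simple '' J) : Subgroup W) : Set W).Finite)
    (lam : Fin n → ℝ) (hpos : ∀ i ∉ J, 0 < lam i) (hzero : ∀ j ∈ J, lam j = 0)
    (ω : List (Fin n))
    (hred : ω.length = cs.length (cs.wordProd ω))
    (hmin : ∀ j ∈ J, cs.length (cs.wordProd ω) <
      cs.length (cs.wordProd ω * cs.simple j)) :
    Legal M lam ω.reverse := by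
  classical
  open NumbersGame in
  have hlift := NumbersGame.isLiftable M K hMK
  set ρ := cs.lift ⟨fun i => reflLin M i, hlift⟩ with hρdef
  have hρ : ∀ t, ρ (cs.simple t) = reflLin M t := fun t => cs.lift_apply_simple hlift t
  have hsred : cs.IsReduced ω.reverse := (cs.isReduced_reverse_iff ω).mpr hred.symm
  have pos : ∀ (w : W) (i : Fin n), cs.length w < cs.length (w * cs.simple i) →
      ∀ t, 0 ≤ ρ w (Pi.single i 1) t := by
    intro w i h t
    refine NumbersGame.rho_pos M K cs ρ hMK hρ (cs.length w) w le_rfl i ?_ t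
    intro hd
    unfold CoxeterSystem.IsRightDescent at hd
    omega
  suffices main : ∀ (post pre : List (Fin n)), pre ++ post = ω.reverse →
      Legal M (play M lam pre) post by
    exact main ω.reverse [] rfl
  intro post
  induction post with
  | nil => intro pre hpre; exact trivial
  | cons c rest ih =>
    intro pre hpre
    have hredpre : cs.IsReduced pre := by
      have h1 : pre = (ω.reverse).take pre.length := by
        rw [← hpre, List.take_left]
      rw [h1]
      exact hsred.take _
    have hcrest : c :: rest = (ω.reverse).drop pre.length := by
      rw [← hpre, List.drop_left]
    have hredcrest : cs.IsReduced (c :: rest) := by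
      rw [hcrest]; exact hsred.drop _
    have hredrest : cs.IsReduced rest := hredcrest.drop 1
    have hlpre : cs.length (cs.wordProd pre) = pre.length := hredpre
    have hlcrest : cs.length (cs.simple c * cs.wordProd rest) = rest.length + 1 := by
      have h2 : cs.length (cs.wordProd (c :: rest)) = (c :: rest).length := hredcrest
      rw [cs.wordProd_cons] at h2
      simpa using h2
    have hlrest : cs.length (cs.wordProd rest) = rest.length := hredrest
    have hpc : cs.length (cs.wordProd pre * cs.simple c) = pre.length + 1 := by
      have h1 : (ω.reverse).take (pre.length + 1) = pre ++ [c] := by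
        rw [← hpre, List.take_append, List.take_of_length_le (by omega)]
        simp
      have h2 : cs.IsReduced (pre ++ [c]) := by
        rw [← h1]; exact hsred.take _
      have h3 : cs.length (cs.wordProd (pre ++ [c])) = (pre ++ [c]).length := h2
      rw [cs.wordProd_append, cs.wordProd_singleton] at h3
      simpa using h3
    set β := ρ (cs.wordProd pre) (Pi.single c 1) with hβdef
    have hβ : ∀ t, 0 ≤ β t := fun t => pos (cs.wordProd pre) c (by omega) t
    have hstrict : ∃ t₀, t₀ ∉ J ∧ 0 < β t₀ := by
      by_contra hno
      push_neg at hno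
      have hzero' : ∀ t₀, t₀ ∉ J → β t₀ = 0 := fun t h => le_antisymm (hno t h) (hβ t)
      set r := cs.wordProd rest with hrdef
      have hδasc : cs.length r⁻¹ < cs.length (r⁻¹ * cs.simple c) := by
        have h4 : r⁻¹ * cs.simple c = (cs.simple c * r)⁻¹ := by
          rw [mul_inv_rev, cs.inv_simple]
        rw [h4, cs.length_inv, cs.length_inv, hrdef, hlrest, hlcrest]
        omega
      set δ := ρ r⁻¹ (Pi.single c 1) with hδdef
      have hδ : ∀ t, 0 ≤ δ t := fun t => pos r⁻¹ c hδasc t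
      have hδne : δ ≠ 0 := by
        intro h0
        have h2 : (ρ r) δ = Pi.single c 1 := by
          rw [hδdef, ← Module.End.mul_apply, ← map_mul, mul_inv_cancel, map_one,
            Module.End.one_apply]
        rw [h0, map_zero] at h2
        have h3 := congrFun h2 c
        simp [Pi.single_apply] at h3
      obtain ⟨t1, ht1⟩ : ∃ t1, δ t1 ≠ 0 := Function.ne_iff.mp hδne
      have hδt1 : 0 < δ t1 := lt_of_le_of_ne (hδ t1) (Ne.symm ht1)
      have hwrev : cs.wordProd ω.reverse = (cs.wordProd ω)⁻¹ := cs.wordProd_reverse ω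
      have hsplit : cs.wordProd ω.reverse = cs.wordProd pre * (cs.simple c * r) := by
        rw [← hpre, cs.wordProd_append, cs.wordProd_cons]
      have hgrp : cs.wordProd ω * cs.wordProd pre = r⁻¹ * cs.simple c := by
        have h3 : cs.wordProd ω = (cs.wordProd ω.reverse)⁻¹ := by rw [hwrev, inv_inv]
        rw [h3, hsplit, mul_inv_rev, mul_inv_rev, cs.inv_simple]
        group
      have hkey : ρ (cs.wordProd ω) β = -δ := by
        calc ρ (cs.wordProd ω) β = ρ (cs.wordProd ω * cs.wordProd pre) (Pi.single c 1) := by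
              rw [hβdef, map_mul, Module.End.mul_apply]
          _ = ρ (r⁻¹ * cs.simple c) (Pi.single c 1) := by rw [hgrp]
          _ = ρ r⁻¹ (reflLin M c (Pi.single c 1)) := by
              rw [map_mul, Module.End.mul_apply, hρ]
          _ = ρ r⁻¹ (-(Pi.single c 1)) := by
              rw [NumbersGame.reflLin_single, hMK.1 c]
              congr 1
              module
          _ = -δ := by rw [map_neg, hδdef]
      have hexp : ρ (cs.wordProd ω) β = ∑ t2, β t2 • ρ (cs.wordProd ω) (Pi.single t2 1) := by
        conv_lhs => rw [show β = ∑ t2, β t2 • (Pi.single t2 1 : Fin n → ℝ) from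
          NumbersGame.eq_sum_single β]
        rw [map_sum]
        simp only [map_smul]
      have hge : 0 ≤ (ρ (cs.wordProd ω) β) t1 := by
        rw [hexp, Finset.sum_apply]
        apply Finset.sum_nonneg
        intro t2 _
        simp only [Pi.smul_apply, smul_eq_mul]
        by_cases ht2 : t2 ∈ J
        · exact mul_nonneg (hβ t2) (pos (cs.wordProd ω) t2 (hmin t2 ht2) t1)
        · rw [hzero' t2 ht2, zero_mul]
      rw [hkey] at hge
      simp only [Pi.neg_apply] at hge
      linarith
    obtain ⟨t₀, ht₀J, ht₀pos⟩ := hstrict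
    refine ⟨?_, ?_⟩
    · rw [NumbersGame.play_apply M K cs ρ hρ pre lam c]
      apply Finset.sum_pos'
      · intro u2 _
        by_cases hu2 : u2 ∈ J
        · rw [hzero u2 hu2, zero_mul]
        · exact mul_nonneg (le_of_lt (hpos u2 hu2)) (hβ u2)
      · exact ⟨t₀, Finset.mem_univ _, mul_pos (hpos t₀ ht₀J) (ht₀pos)⟩
    · have hfp : fire M (play M lam pre) c = play M lam (pre ++ [c]) := by
        rw [NumbersGame.play_append]
        rfl
      rw [hfp]
      apply ih (pre ++ [c])
      rw [← hpre]
      simp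
end

section
/- Suppose W = W(Γ,M) is finite for an E-GCM graph, J ⊆ {1,…,n}, and let (w_0)_J be the longest element of the parabolic subgroup W_J. Then every game sequence of the numbers game starting from any position λ with λ_i > 0 for i ∉ J and λ_j = 0 for j ∈ J has length exactly ℓ(w_0) − ℓ((w_0)_J), where w_0 is the longest element of W. -/
open Real

noncomputable section
namespace NG
variable {n : ℕ}

def ee (i : Fin n) : Fin n → ℝ := Pi.single i 1
def dd (M : Matrix (Fin n) (Fin n) ℝ) (i : Fin n) (v : Fin n → ℝ) : ℝ := ∑ j, M i j * v j

lemma reflLin_apply (M : Matrix (Fin n) (Fin n) ℝ) (i : Fin n) (v : Fin n → ℝ) :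
    reflLin M i v = v - dd M i v • ee i := rfl

lemma dd_add (M : Matrix (Fin n) (Fin n) ℝ) (i : Fin n) (v w : Fin n → ℝ) :
    dd M i (v + w) = dd M i v + dd M i w := by
  simp [dd, mul_add, Finset.sum_add_distrib]

lemma dd_smul (M : Matrix (Fin n) (Fin n) ℝ) (i : Fin n) (c : ℝ) (v : Fin n → ℝ) :
    dd M i (c • v) = c * dd M i v := by
  simp only [dd, Pi.smul_apply, smul_eq_mul, Finset.mul_sum]
  exact Finset.sum_congr rfl fun j _ => by ring

lemma dd_ee (M : Matrix (Fin n) (Fin n) ℝ) (k l : Fin n) : dd M k (ee l) = M k l := by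
  simp [dd, ee, Pi.single_apply, mul_ite]

lemma reflLin_ee (M : Matrix (Fin n) (Fin n) ℝ) (i k : Fin n) :
    reflLin M i (ee k) = ee k - M i k • ee i := by
  rw [reflLin_apply, dd_ee]

lemma reflLin_ee_self (M : Matrix (Fin n) (Fin n) ℝ) (i : Fin n) (hii : M i i = 2) :
    reflLin M i (ee i) = -(ee i) := by
  rw [reflLin_ee, hii]
  ext t; simp [ee]; ring

def FL (M : Matrix (Fin n) (Fin n) ℝ) (i j : Fin n) (X : Matrix (Fin 2) (Fin 2) ℝ) :
    Module.End ℝ (Fin n → ℝ) where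
  toFun v := v + (X 0 0 * dd M i v + X 0 1 * dd M j v) • ee i
      + (X 1 0 * dd M i v + X 1 1 * dd M j v) • ee j
  map_add' v w := by
    simp only [dd_add]; ext t
    simp only [Pi.add_apply, Pi.smul_apply, smul_eq_mul]
    ring
  map_smul' c v := by
    simp only [dd_smul, RingHom.id_apply]; ext t
    simp only [Pi.add_apply, Pi.smul_apply, smul_eq_mul]
    ring

lemma FL_apply (M : Matrix (Fin n) (Fin n) ℝ) (i j : Fin n) (X : Matrix (Fin 2) (Fin 2) ℝ)
    (v : Fin n → ℝ) :
    FL M i j X v = v + (X 0 0 * dd M i v + X 0 1 * dd M j v) • ee i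
      + (X 1 0 * dd M i v + X 1 1 * dd M j v) • ee j := rfl

def CC (M : Matrix (Fin n) (Fin n) ℝ) (i j : Fin n) : Matrix (Fin 2) (Fin 2) ℝ :=
  !![2, M i j; M j i, 2]

lemma FL_mul (M : Matrix (Fin n) (Fin n) ℝ) (i j : Fin n) (hii : M i i = 2) (hjj : M j j = 2)
    (X Y : Matrix (Fin 2) (Fin 2) ℝ) :
    FL M i j X * FL M i j Y = FL M i j (Y + X + X * CC M i j * Y) := by
  apply LinearMap.ext; intro v
  rw [Module.End.mul_apply]
  rw [FL_apply, FL_apply, FL_apply]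
  simp only [dd_add, dd_smul, dd_ee, hii, hjj]
  have e00 : (CC M i j) 0 0 = 2 := by simp [CC]
  have e01 : (CC M i j) 0 1 = M i j := by simp [CC]
  have e10 : (CC M i j) 1 0 = M j i := by simp [CC]
  have e11 : (CC M i j) 1 1 = 2 := by simp [CC]
  funext t
  simp only [Pi.add_apply, Pi.smul_apply, smul_eq_mul, Matrix.add_apply, Matrix.mul_apply,
    Fin.sum_univ_two, e00, e01, e10, e11]
  ring

lemma FL_zero (M : Matrix (Fin n) (Fin n) ℝ) (i j : Fin n) : FL M i j 0 = 1 := by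
  apply LinearMap.ext; intro v
  funext t
  simp [FL_apply]

lemma reflLin_eq_FLi (M : Matrix (Fin n) (Fin n) ℝ) (i j : Fin n) :
    reflLin M i = FL M i j !![-1, 0; 0, 0] := by
  apply LinearMap.ext; intro v
  rw [reflLin_apply, FL_apply]
  have e00 : (!![(-1:ℝ), 0; 0, 0]) 0 0 = -1 := by simp
  have e01 : (!![(-1:ℝ), 0; 0, 0]) 0 1 = 0 := by simp
  have e10 : (!![(-1:ℝ), 0; 0, 0]) 1 0 = 0 := by simp
  have e11 : (!![(-1:ℝ), 0; 0, 0]) 1 1 = 0 := by simp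
  funext t
  simp only [e00, e01, e10, e11, Pi.add_apply, Pi.sub_apply, Pi.smul_apply, smul_eq_mul]
  ring

lemma reflLin_eq_FLj (M : Matrix (Fin n) (Fin n) ℝ) (i j : Fin n) :
    reflLin M j = FL M i j !![0, 0; 0, -1] := by
  apply LinearMap.ext; intro v
  rw [reflLin_apply, FL_apply]
  have e00 : (!![(0:ℝ), 0; 0, -1]) 0 0 = 0 := by simp
  have e01 : (!![(0:ℝ), 0; 0, -1]) 0 1 = 0 := by simp
  have e10 : (!![(0:ℝ), 0; 0, -1]) 1 0 = 0 := by simp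
  have e11 : (!![(0:ℝ), 0; 0, -1]) 1 1 = -1 := by simp
  funext t
  simp only [e00, e01, e10, e11, Pi.add_apply, Pi.sub_apply, Pi.smul_apply, smul_eq_mul]
  ring

lemma gmul (C X Y : Matrix (Fin 2) (Fin 2) ℝ) :
    (1 + X * C) * (1 + Y * C) = 1 + (Y + X + X * C * Y) * C := by noncomm_ring

lemma FL_pow (M : Matrix (Fin n) (Fin n) ℝ) (i j : Fin n) (hii : M i i = 2) (hjj : M j j = 2)
    (X Y : Matrix (Fin 2) (Fin 2) ℝ) (k : ℕ) :
    ∃ Z, (FL M i j X * FL M i j Y) ^ k = FL M i j Z ∧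
      ((1 + X * CC M i j) * (1 + Y * CC M i j)) ^ k = 1 + Z * CC M i j := by
  induction k with
  | zero => exact ⟨0, by rw [pow_zero, FL_zero], by rw [pow_zero]; simp⟩
  | succ k ih =>
    obtain ⟨Z, h1, h2⟩ := ih
    refine ⟨Y + (X + Z + Z * CC M i j * X) + (X + Z + Z * CC M i j * X) * CC M i j * Y, ?_, ?_⟩
    · rw [pow_succ, h1, ← mul_assoc, FL_mul M i j hii hjj Z X, FL_mul M i j hii hjj _ Y]
    · rw [pow_succ, h2, ← mul_assoc, gmul, gmul]

lemma cancel (a b : ℝ) (h : 4 - a * b ≠ 0) (Z : Matrix (Fin 2) (Fin 2) ℝ)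
    (hZ : Z * !![2, a; b, 2] = 0) : Z = 0 := by
  have h1 : ∀ p, Z p 0 * 2 + Z p 1 * b = 0 := by
    intro p
    have := congrFun (congrFun hZ p) 0
    simpa [Matrix.mul_apply, Fin.sum_univ_two] using this
  have h2 : ∀ p, Z p 0 * a + Z p 1 * 2 = 0 := by
    intro p
    have := congrFun (congrFun hZ p) 1
    simpa [Matrix.mul_apply, Fin.sum_univ_two] using this
  ext p q
  have k0 : Z p 0 * (4 - a * b) = 0 := by linear_combination 2 * h1 p - b * h2 p
  have k1 : Z p 1 * (4 - a * b) = 0 := by linear_combination 2 * h2 p - a * h1 p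
  have z0 : Z p 0 = 0 := by
    rcases mul_eq_zero.mp k0 with h' | h'
    · exact h'
    · exact absurd h' h
  have z1 : Z p 1 = 0 := by
    rcases mul_eq_zero.mp k1 with h' | h'
    · exact h'
    · exact absurd h' h
  fin_cases q <;> simp [z0, z1]

/-- The 2×2 braid relation, trigonometric case. -/
lemma braidMat (m : ℕ) (hm : 2 ≤ m) (a b : ℝ) (hab : a * b = 4 * Real.cos (π / m) ^ 2)
    (h0 : a = 0 ↔ b = 0) :
    (!![(-1 : ℝ), -a; 0, 1] * !![1, 0; -b, -1]) ^ m = 1 := by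
  have hprod : (!![(-1 : ℝ), -a; 0, 1] * !![1, 0; -b, -1]) = !![a*b - 1, a; -b, -1] := by
    ext p q; fin_cases p <;> fin_cases q <;>
      simp [Matrix.mul_apply, Fin.sum_univ_two] <;> ring
  rw [hprod]
  rcases eq_or_lt_of_le hm with hm2 | hm3
  · -- m = 2
    have : (π / (m : ℝ)) = π / 2 := by rw [← hm2]; norm_num
    rw [this, Real.cos_pi_div_two] at hab
    have hab' : a * b = 0 := by simpa using hab
    have ha : a = 0 := by
      rcases mul_eq_zero.mp hab' with h | h
      · exact h
      · exact h0.mpr h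
    have hb : b = 0 := h0.mp ha
    rw [← hm2, ha, hb, Matrix.one_fin_two]
    norm_num [pow_succ, pow_zero, Matrix.mul_fin_two]
  · -- m ≥ 3
    set A : Matrix (Fin 2) (Fin 2) ℝ := !![a*b - 1, a; -b, -1] with hA
    have hmR : (3 : ℝ) ≤ (m : ℝ) := by exact_mod_cast hm3
    have hmpos : (0 : ℝ) < m := by linarith
    set θ : ℝ := π / m with hθ
    have hθpos : 0 < θ := div_pos Real.pi_pos hmpos
    have h2θ : 0 < 2 * θ ∧ 2 * θ < π := by
      constructor
      · linarith
      · rw [hθ, ← mul_div_assoc, div_lt_iff₀ hmpos]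
        nlinarith [Real.pi_pos]
    have hsin : 0 < Real.sin (2 * θ) := Real.sin_pos_of_pos_of_lt_pi h2θ.1 h2θ.2
    set u : ℕ → ℝ := fun k => Real.sin (2 * k * θ) / Real.sin (2 * θ) with hu
    have hu0 : u 0 = 0 := by simp [hu]
    have hu1 : u 1 = 1 := by
      simp only [hu, Nat.cast_one]
      rw [div_eq_one_iff_eq hsin.ne']
      ring_nf
    have hA2 : A * A = (a*b - 2) • A - 1 := by
      ext p q; fin_cases p <;> fin_cases q <;>
        simp [hA, Matrix.mul_apply, Fin.sum_univ_two, Matrix.one_fin_two] <;> ring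
    have hcos2 : a * b - 2 = 2 * Real.cos (2 * θ) := by
      rw [Real.cos_two_mul]; rw [hab]; ring
    have hrec : ∀ k : ℕ, u (k + 2) = (a*b - 2) * u (k + 1) - u k := by
      intro k
      rw [hcos2]
      have e1 : (2 : ℝ) * (k + 2) * θ = 2 * (k+1) * θ + 2 * θ := by ring
      have e2 : (2 : ℝ) * k * θ = 2 * (k+1) * θ - 2 * θ := by ring
      simp only [hu]
      push_cast
      rw [e1, e2, Real.sin_add, Real.sin_sub]
      field_simp
      ring
    have key : ∀ k : ℕ, A ^ (k + 1) = u (k + 1) • A - u k • 1 := by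
      intro k
      induction k with
      | zero => simp [hu1, hu0]
      | succ k ih =>
        rw [pow_succ, ih]
        rw [sub_mul, smul_mul_assoc, smul_mul_assoc, hA2, one_mul]
        rw [hrec k]
        ext p q
        simp only [Matrix.sub_apply, Matrix.smul_apply, Matrix.one_apply, smul_eq_mul]
        ring
    obtain ⟨m', rfl⟩ : ∃ m', m = m' + 1 := ⟨m - 1, by omega⟩
    rw [key m']
    have humtop : u (m' + 1) = 0 := by
      have : (2 : ℝ) * (m' + 1) * θ = 2 * π := by
        rw [hθ]; push_cast; field_simp
      simp only [hu]
      push_cast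
      rw [this, Real.sin_two_pi, zero_div]
    have hum' : u m' = -1 := by
      have : (2 : ℝ) * m' * θ = 2 * π - 2 * θ := by
        rw [hθ]; push_cast; field_simp; ring
      simp only [hu]
      push_cast
      rw [this, Real.sin_sub, Real.sin_two_pi, Real.cos_two_pi]
      field_simp
      ring
    rw [humtop, hum']
    simp


lemma reflLin_sq (M : Matrix (Fin n) (Fin n) ℝ) (i : Fin n) (hii : M i i = 2) :
    reflLin M i * reflLin M i = 1 := by
  apply LinearMap.ext; intro v
  rw [Module.End.mul_apply, reflLin_apply, reflLin_apply]
  have : dd M i (v - dd M i v • ee i) = - dd M i v := by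
    rw [sub_eq_add_neg, dd_add, ← neg_smul, dd_smul, dd_ee, hii]
    ring
  rw [this]
  funext t
  simp only [Pi.sub_apply, Pi.smul_apply, smul_eq_mul, Module.End.one_apply]
  ring

theorem liftable (M : Matrix (Fin n) (Fin n) ℝ) (K : CoxeterMatrix (Fin n))
    (hMK : IsEGCM M K) : CoxeterMatrix.IsLiftable K (fun i => reflLin M i) := by
  obtain ⟨hdiag, hnonpos, hzero_iff, hamp⟩ := hMK
  intro i j
  by_cases hij : i = j
  · subst hij
    rw [K.diagonal i, pow_one]
    exact reflLin_sq M i (hdiag i)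
  · rcases Nat.eq_zero_or_pos (K i j) with hK0 | hKpos
    · rw [hK0, pow_zero]
    · rcases hamp i j hij with ⟨h0, _⟩ | ⟨h2m, heq⟩
      · omega
      · set m := K i j with hm
        set a := M i j with ha
        set b := M j i with hb
        have hab4 : a * b < 4 := by
          have hmR : (2:ℝ) ≤ (m:ℝ) := by exact_mod_cast h2m
          have hθpos : 0 < π / m := div_pos Real.pi_pos (by linarith)
          have hθle : π / m ≤ π := by
            rw [div_le_iff₀ (by linarith : (0:ℝ) < m)]
            nlinarith [Real.pi_pos]
          have hc1 : Real.cos (π / m) < 1 := by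
            have := Real.cos_lt_cos_of_nonneg_of_le_pi (le_refl 0) hθle hθpos
            simpa using this
          have hθle2 : π / m ≤ π / 2 := by
            rw [div_le_div_iff₀ (by linarith : (0:ℝ) < m) (by norm_num : (0:ℝ) < 2)]
            nlinarith [Real.pi_pos]
          have hc0 : 0 ≤ Real.cos (π / m) :=
            Real.cos_nonneg_of_mem_Icc ⟨by linarith, hθle2⟩
          nlinarith [heq]
        simp only
        rw [reflLin_eq_FLi M i j, reflLin_eq_FLj M i j]
        obtain ⟨Z, hZ1, hZ2⟩ := FL_pow M i j (hdiag i) (hdiag j) !![-1,0;0,0] !![0,0;0,-1] m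
        have hXi : (1 : Matrix (Fin 2) (Fin 2) ℝ) + !![-1,0;0,0] * CC M i j = !![-1, -a; 0, 1] := by
          rw [CC, Matrix.one_fin_two, Matrix.mul_fin_two]
          norm_num
          rfl
        have hXj : (1 : Matrix (Fin 2) (Fin 2) ℝ) + !![0,0;0,-1] * CC M i j = !![1, 0; -b, -1] := by
          rw [CC, Matrix.one_fin_two, Matrix.mul_fin_two]
          norm_num
          rfl
        rw [hXi, hXj] at hZ2
        have hbm := braidMat m h2m a b heq (by
          constructor
          · intro h; exact (hzero_iff i j).mp h
          · intro h; exact (hzero_iff j i).mp h)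
        rw [hbm] at hZ2
        have hZC : Z * CC M i j = 0 := by
          have := hZ2.symm
          rwa [add_eq_left] at this
        have hZ0 : Z = 0 := by
          apply cancel a b (by linarith) Z
          rw [← CC]; exact hZC
        rw [hZ1, hZ0, FL_zero]


/-- coefficient sequence of the alternating-word action on `e_i` (apply `σ_j` first). -/
def pq (a b : ℝ) : ℕ → ℝ × ℝ
  | 0 => (1, 0)
  | (k+1) => if k % 2 = 0 then ((pq a b k).1, -b * (pq a b k).1 - (pq a b k).2)
      else (-a * (pq a b k).2 - (pq a b k).1, (pq a b k).2)

lemma pq_nonneg_trig (m : ℕ) (hm : 2 ≤ m) (a b : ℝ) (ha : a ≤ 0) (hb : b ≤ 0)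
    (hab : a * b = 4 * Real.cos (π / m) ^ 2) :
    ∀ k, k + 1 ≤ m → 0 ≤ (pq a b k).1 ∧ 0 ≤ (pq a b k).2 := by
  rcases eq_or_lt_of_le hm with hm2 | hm3
  · -- m = 2 : only k = 0, 1
    intro k hk
    have hk1 : k ≤ 1 := by omega
    interval_cases k
    · constructor <;> simp [pq]
    · refine ⟨?_, ?_⟩ <;> simp [pq] <;> linarith
  · -- m ≥ 3
    have hmR : (3:ℝ) ≤ (m:ℝ) := by exact_mod_cast hm3
    have hmpos : (0:ℝ) < m := by linarith
    set θ : ℝ := π / m with hθ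
    have hθpos : 0 < θ := div_pos Real.pi_pos hmpos
    have hθlt : θ < π / 2 := by
      rw [hθ, div_lt_div_iff₀ hmpos (by norm_num : (0:ℝ) < 2)]
      nlinarith [Real.pi_pos]
    have hsinθ : 0 < Real.sin θ := Real.sin_pos_of_pos_of_lt_pi hθpos (by linarith [Real.pi_pos])
    have hcos : 0 < Real.cos θ := Real.cos_pos_of_mem_Ioo ⟨by linarith, hθlt⟩
    set c : ℝ := 2 * Real.cos θ with hc
    have hcpos : 0 < c := by positivity
    have hc2 : c ^ 2 = a * b := by rw [hab, hc]; ring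
    have hbneg : b < 0 := by
      rcases lt_or_eq_of_le hb with h | h
      · exact h
      · exfalso
        have h0 : a * b = 0 := by rw [h, mul_zero]
        nlinarith [hcos, hab, h0]
    set v : ℕ → ℝ := fun t => Real.sin (t * θ) / Real.sin θ with hv
    have hv0 : v 0 = 0 := by simp [hv]
    have hv1 : v 1 = 1 := by
      simp only [hv, Nat.cast_one, one_mul]
      rw [div_eq_one_iff_eq hsinθ.ne']
    have hrec : ∀ t : ℕ, v (t + 2) = c * v (t + 1) - v t := by
      intro t
      simp only [hv]
      have e1 : ((t:ℝ) + 2) * θ = ((t:ℝ)+1) * θ + θ := by ring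
      have e2 : (t:ℝ) * θ = ((t:ℝ)+1) * θ - θ := by ring
      push_cast
      rw [e1, e2, Real.sin_add, Real.sin_sub]
      field_simp
      ring
    have hvnn : ∀ t : ℕ, t ≤ m → 0 ≤ v t := by
      intro t ht
      apply div_nonneg _ hsinθ.le
      apply Real.sin_nonneg_of_nonneg_of_le_pi
      · positivity
      · rw [hθ, ← mul_div_assoc, div_le_iff₀ hmpos]
        have : (t:ℝ) ≤ (m:ℝ) := by exact_mod_cast ht
        nlinarith [Real.pi_pos]
    have hform : ∀ k, (pq a b k).1 = v (2*(k/2)+1) ∧ (pq a b k).2 = ((-b)/c) * v (2*((k+1)/2)) := by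
      intro k
      induction k with
      | zero =>
        constructor
        · show (1:ℝ) = v (2*(0/2)+1)
          rw [show 2*(0/2)+1 = 1 from rfl, hv1]
        · show (0:ℝ) = (-b)/c * v (2*((0+1)/2))
          rw [show 2*((0+1)/2) = 0 from rfl, hv0, mul_zero]
      | succ k ih =>
        obtain ⟨ihp, ihq⟩ := ih
        rcases Nat.even_or_odd k with hke | hko
        · have hk2 : k % 2 = 0 := Nat.even_iff.mp hke
          have i1 : 2*(k/2)+1 = k+1 := by omega
          have i2 : 2*((k+1)/2) = k := by omega
          have i3 : 2*((k+1)/2)+1 = k+1 := by omega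
          have i4 : 2*((k+2)/2) = k+2 := by omega
          rw [i1] at ihp; rw [i2] at ihq
          constructor
          · show (pq a b (k+1)).1 = _
            rw [pq, if_pos hk2]
            simpa [i3] using ihp
          · show (pq a b (k+1)).2 = _
            rw [pq, if_pos hk2]
            simp only [i4]
            rw [hrec k, ihp, ihq]
            have hbc : (-b)/c * c = -b := div_mul_cancel₀ _ hcpos.ne'
            linear_combination (-(v (k+1))) * hbc
        · have hk1 : k % 2 = 1 := Nat.odd_iff.mp hko
          have hk2 : ¬ (k % 2 = 0) := by omega
          have i1 : 2*(k/2)+1 = k := by omega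
          have i2 : 2*((k+1)/2) = k+1 := by omega
          have i3 : 2*((k+1)/2)+1 = k+2 := by omega
          have i4 : 2*((k+2)/2) = k+1 := by omega
          rw [i1] at ihp; rw [i2] at ihq
          constructor
          · show (pq a b (k+1)).1 = _
            rw [pq, if_neg hk2]
            simp only [i3]
            rw [hrec k, ihp, ihq]
            have hclt : -a * (-b / c) = c := by
              have h1 : -a * (-b / c) = (a*b)/c := by ring
              rw [h1, ← hc2, sq, mul_div_assoc, div_self hcpos.ne', mul_one]
            linear_combination (v (k+1)) * hclt
          · show (pq a b (k+1)).2 = _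
            rw [pq, if_neg hk2]
            simpa [i4] using ihq
    intro k hk
    obtain ⟨hp, hq⟩ := hform k
    rw [hp, hq]
    constructor
    · exact hvnn _ (by omega)
    · apply mul_nonneg (div_nonneg (by linarith) hcpos.le)
      exact hvnn _ (by omega)

lemma pq_nonneg_hyp (a b : ℝ) (ha : a ≤ 0) (hb : b ≤ 0) (hab : 4 ≤ a * b) :
    ∀ k, 0 ≤ (pq a b k).1 ∧ 0 ≤ (pq a b k).2 := by
  have key : ∀ k, (0 ≤ (pq a b k).1 ∧ 0 ≤ (pq a b k).2) ∧
      (k % 2 = 0 → 2 * (pq a b k).2 ≤ (-b) * (pq a b k).1 ∧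
          (-a) * (pq a b k).2 ≤ 2 * (pq a b k).1) ∧
      (k % 2 = 1 → 2 * (pq a b k).1 ≤ (-a) * (pq a b k).2 ∧
          (-b) * (pq a b k).1 ≤ 2 * (pq a b k).2) := by
    intro k
    induction k with
    | zero =>
      refine ⟨⟨by norm_num [pq], by norm_num [pq]⟩, ?_, by omega⟩
      intro _
      norm_num [pq]
      linarith
    | succ k ih =>
      obtain ⟨⟨hp, hq⟩, heven, hodd⟩ := ih
      rcases Nat.even_or_odd k with hke | hko
      · have hk2 : k % 2 = 0 := Nat.even_iff.mp hke
        obtain ⟨h1, h2⟩ := heven hk2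
        rw [pq, if_pos hk2]
        refine ⟨⟨by simpa using hp, by simp; nlinarith⟩, by omega, ?_⟩
        intro _
        simp only
        constructor
        · nlinarith
        · nlinarith
      · have hk2 : k % 2 = 1 := Nat.odd_iff.mp hko
        obtain ⟨h1, h2⟩ := hodd hk2
        rw [pq, if_neg (by omega)]
        refine ⟨⟨by simp; nlinarith, by simpa using hq⟩, ?_, by omega⟩
        intro _
        simp only
        constructor
        · nlinarith
        · nlinarith
  intro k
  exact (key k).1


section CoxeterSide

open CoxeterSystem

variable {n : ℕ} {W : Type*} [Group W]
variable (M : Matrix (Fin n) (Fin n) ℝ) (K : CoxeterMatrix (Fin n))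
variable (hMK : IsEGCM M K) (cs : CoxeterSystem K W)

/-- the representation of `W` on `ℝⁿ` by the quasi-reflections `reflLin`. -/
def rho : W →* Module.End ℝ (Fin n → ℝ) :=
  cs.lift ⟨fun i => reflLin M i, liftable M K hMK⟩

lemma rho_simple (i : Fin n) : rho M K hMK cs (cs.simple i) = reflLin M i :=
  cs.lift_apply_simple (liftable M K hMK) i

lemma rho_mul_apply (x y : W) (v : Fin n → ℝ) :
    rho M K hMK cs (x * y) v = rho M K hMK cs x (rho M K hMK cs y v) := by
  rw [map_mul, Module.End.mul_apply]

lemma rho_ne_zero (x : W) (i : Fin n) : rho M K hMK cs x (ee i) ≠ 0 := by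
  intro h
  have h2 : rho M K hMK cs x⁻¹ (rho M K hMK cs x (ee i)) = ee i := by
    rw [← rho_mul_apply, inv_mul_cancel, map_one, Module.End.one_apply]
  rw [h, map_zero] at h2
  have := congrFun h2 i
  simp [ee, Pi.single_eq_same] at this

/-- coordinatewise nonnegative -/
def NN (v : Fin n → ℝ) : Prop := ∀ k, 0 ≤ v k
/-- coordinatewise nonpositive -/
def NP (v : Fin n → ℝ) : Prop := ∀ k, v k ≤ 0

lemma NN_NP_zero {v : Fin n → ℝ} (h1 : NN v) (h2 : NP v) : v = 0 :=
  funext fun k => le_antisymm (h2 k) (h1 k)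

local prefix:100 "ℓ" => cs.length
local prefix:100 "π" => cs.wordProd
local prefix:100 "σ" => cs.simple

lemma alt_rho (i j : Fin n) (hij : i ≠ j) : ∀ k,
    rho M K hMK cs (π (alternatingWord i j k)) (ee i) =
      (pq (M i j) (M j i) k).1 • ee i + (pq (M i j) (M j i) k).2 • ee j := by
  have hii : M i i = 2 := hMK.1 i
  have hjj : M j j = 2 := hMK.1 j
  intro k
  induction k with
  | zero =>
    simp only [alternatingWord, wordProd_nil, map_one, Module.End.one_apply, pq]
    funext t
    simp [ee]
  | succ k ih =>
    rw [alternatingWord_succ', wordProd_cons, map_mul, Module.End.mul_apply, ih]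
    rcases Nat.even_or_odd k with hke | hko
    · have hk2 : k % 2 = 0 := Nat.even_iff.mp hke
      rw [if_pos hke, rho_simple]
      show reflLin M j _ = _
      rw [reflLin_apply]
      have hdd : dd M j ((pq (M i j) (M j i) k).1 • ee i + (pq (M i j) (M j i) k).2 • ee j)
          = (pq (M i j) (M j i) k).1 * M j i + (pq (M i j) (M j i) k).2 * 2 := by
        rw [dd_add, dd_smul, dd_smul, dd_ee, dd_ee, hjj]
      rw [hdd]
      show _ = (pq (M i j) (M j i) (k+1)).1 • ee i + (pq (M i j) (M j i) (k+1)).2 • ee j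
      rw [pq, if_pos hk2]
      funext t
      simp only [Pi.add_apply, Pi.sub_apply, Pi.smul_apply, smul_eq_mul]
      ring
    · have hk2 : ¬ (k % 2 = 0) := by
        have := Nat.odd_iff.mp hko; omega
      rw [if_neg (Nat.not_even_iff_odd.mpr hko), rho_simple]
      show reflLin M i _ = _
      rw [reflLin_apply]
      have hdd : dd M i ((pq (M i j) (M j i) k).1 • ee i + (pq (M i j) (M j i) k).2 • ee j)
          = (pq (M i j) (M j i) k).1 * 2 + (pq (M i j) (M j i) k).2 * M i j := by
        rw [dd_add, dd_smul, dd_smul, dd_ee, dd_ee, hii]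
      rw [hdd]
      show _ = (pq (M i j) (M j i) (k+1)).1 • ee i + (pq (M i j) (M j i) (k+1)).2 • ee j
      rw [pq, if_neg hk2]
      funext t
      simp only [Pi.add_apply, Pi.sub_apply, Pi.smul_apply, smul_eq_mul]
      ring

lemma peel : ∀ (L : ℕ) (w : W) (i j : Fin n), ℓ w ≤ L → i ≠ j →
    ¬ cs.IsRightDescent w i → cs.IsRightDescent w j →
    ∃ (u : W) (r : ℕ), 1 ≤ r ∧ w = u * π (alternatingWord i j r) ∧
      ℓ w = ℓ u + r ∧ ¬ cs.IsRightDescent u i ∧ ¬ cs.IsRightDescent u j := by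
  intro L
  induction L with
  | zero =>
    intro w i j hL _ _ hdj
    have : w = 1 := cs.length_eq_zero_iff.mp (Nat.le_zero.mp hL)
    rw [this] at hdj
    exact absurd hdj (cs.not_isRightDescent_one j)
  | succ L ihL =>
    intro w i j hL hij hdi hdj
    set w' := w * σ j with hw'
    have hlen' : ℓ w' + 1 = ℓ w := cs.isRightDescent_iff.mp hdj
    have hw'j : ¬ cs.IsRightDescent w' j := cs.isRightDescent_iff_not_isRightDescent_mul.mp hdj
    have hww' : w = w' * σ j := by rw [hw', simple_mul_simple_cancel_right]
    by_cases hw'i : cs.IsRightDescent w' i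
    · obtain ⟨u, r, hr1, hfac, hlen, huj2, hui2⟩ :=
        ihL w' j i (by omega) (Ne.symm hij) hw'j hw'i
      refine ⟨u, r + 1, by omega, ?_, by omega, hui2, huj2⟩
      rw [alternatingWord_succ, wordProd_concat, ← mul_assoc, ← hfac, hww']
    · refine ⟨w', 1, le_refl 1, ?_, by omega, hw'i, hw'j⟩
      have : alternatingWord i j 1 = [j] := rfl
      rw [this, wordProd_singleton, ← hww']

/-- Eriksson/Humphreys positivity: if `i` is not a right descent of `w`,
then `ρ(w) e_i` is coordinatewise nonnegative. -/
theorem posP : ∀ (L : ℕ) (w : W) (i : Fin n), ℓ w ≤ L →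
    ¬ cs.IsRightDescent w i → NN (rho M K hMK cs w (ee i)) := by
  intro L
  induction L with
  | zero =>
    intro w i hL _
    have : w = 1 := cs.length_eq_zero_iff.mp (Nat.le_zero.mp hL)
    rw [this, map_one]
    intro k
    simp only [Module.End.one_apply]
    by_cases hk : k = i
    · subst hk; simp [ee]
    · simp [ee, Pi.single_eq_of_ne hk]
  | succ L ihL =>
    intro w i hL hdi
    by_cases hw1 : w = 1
    · exact ihL w i (by rw [hw1, cs.length_one]; omega) hdi
    · obtain ⟨j, hdj⟩ := cs.exists_rightDescent_of_ne_one hw1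
      have hij : i ≠ j := fun h => hdi (h ▸ hdj)
      obtain ⟨u, r, hr1, hfac, hlen, hui, huj⟩ := peel K cs (L+1) w i j hL hij hdi hdj
      -- the alternating word of length r+1 appended with i is reduced
      have hwsi : ℓ (w * σ i) = ℓ w + 1 := cs.not_isRightDescent_iff.mp hdi
      have hfacsi : w * σ i = u * π (alternatingWord j i (r+1)) := by
        rw [alternatingWord_succ, wordProd_concat, ← mul_assoc, ← hfac]
      have hred : r + 1 ≤ ℓ (π (alternatingWord j i (r+1))) := by
        have h1 : ℓ (w * σ i) ≤ ℓ u + ℓ (π (alternatingWord j i (r+1))) := by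
          rw [hfacsi]; exact cs.length_mul_le u _
        omega
      -- positivity of the rank-2 coefficients
      have ha : M i j ≤ 0 := hMK.2.1 i j hij
      have hb : M j i ≤ 0 := hMK.2.1 j i (Ne.symm hij)
      have hpq : 0 ≤ (pq (M i j) (M j i) r).1 ∧ 0 ≤ (pq (M i j) (M j i) r).2 := by
        rcases hMK.2.2.2 i j hij with ⟨hK0, hab⟩ | ⟨h2m, hab⟩
        · exact pq_nonneg_hyp (M i j) (M j i) ha hb hab r
        · apply pq_nonneg_trig (K i j) h2m (M i j) (M j i) ha hb hab r
          by_contra hcon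
          have hKij : r + 1 > K j i := by rw [K.symmetric j i]; omega
          have hK0 : K j i ≠ 0 := by rw [K.symmetric j i]; omega
          have := cs.not_isReduced_alternatingWord j i hK0 hKij
          apply this
          unfold CoxeterSystem.IsReduced
          have h2 : ℓ (π (alternatingWord j i (r+1))) ≤ r + 1 := by
            have := cs.length_wordProd_le (alternatingWord j i (r+1))
            rwa [length_alternatingWord] at this
          rw [length_alternatingWord]
          omega
      -- assemble
      have hu_i := ihL u i (by omega) hui
      have hu_j := ihL u j (by omega) huj
      have : rho M K hMK cs w (ee i) =
          (pq (M i j) (M j i) r).1 • rho M K hMK cs u (ee i) +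
          (pq (M i j) (M j i) r).2 • rho M K hMK cs u (ee j) := by
        rw [hfac, rho_mul_apply, alt_rho M K hMK cs i j hij r, map_add, map_smul, map_smul]
      rw [this]
      intro k
      simp only [Pi.add_apply, Pi.smul_apply, smul_eq_mul]
      have := hu_i k
      have := hu_j k
      nlinarith [hpq.1, hpq.2, hu_i k, hu_j k]

lemma pos_of_not_descent (w : W) (i : Fin n) (h : ¬ cs.IsRightDescent w i) :
    NN (rho M K hMK cs w (ee i)) :=
  posP M K hMK cs (ℓ w) w i le_rfl h

lemma np_of_descent (w : W) (i : Fin n) (h : cs.IsRightDescent w i) :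
    NP (rho M K hMK cs w (ee i)) := by
  have hc : (w * σ i) * σ i = w := cs.simple_mul_simple_cancel_right i
  have heq : rho M K hMK cs w (ee i) = - rho M K hMK cs (w * σ i) (ee i) := by
    conv_lhs => rw [← hc]
    rw [rho_mul_apply, rho_simple, reflLin_ee_self M i (hMK.1 i), map_neg]
  have hnd : ¬ cs.IsRightDescent (w * σ i) i :=
    cs.isRightDescent_iff_not_isRightDescent_mul.mp h
  have hp := pos_of_not_descent M K hMK cs (w * σ i) i hnd
  intro k
  rw [heq]
  simpa using hp k

lemma NN_or_NP (w : W) (i : Fin n) :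
    NN (rho M K hMK cs w (ee i)) ∨ NP (rho M K hMK cs w (ee i)) := by
  by_cases h : cs.IsRightDescent w i
  · exact Or.inr (np_of_descent M K hMK cs w i h)
  · exact Or.inl (pos_of_not_descent M K hMK cs w i h)

lemma descent_of_np (w : W) (i : Fin n) (h : NP (rho M K hMK cs w (ee i))) :
    cs.IsRightDescent w i := by
  by_contra hnd
  exact rho_ne_zero M K hMK cs w i
    (NN_NP_zero (pos_of_not_descent M K hMK cs w i hnd) h)

lemma not_descent_of_nn (w : W) (i : Fin n) (h : NN (rho M K hMK cs w (ee i))) :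
    ¬ cs.IsRightDescent w i := by
  intro hd
  exact rho_ne_zero M K hMK cs w i (NN_NP_zero h (np_of_descent M K hMK cs w i hd))

lemma sum_single (v : Fin n → ℝ) : v = ∑ k, v k • ee k := by
  funext t
  rw [Finset.sum_apply]
  simp [ee, Pi.single_apply, mul_ite, Finset.sum_ite_eq]

lemma rho_apply_sum (x : W) (v : Fin n → ℝ) :
    rho M K hMK cs x v = ∑ k, v k • rho M K hMK cs x (ee k) := by
  conv_lhs => rw [sum_single v]
  rw [map_sum]
  exact Finset.sum_congr rfl fun k _ => by rw [map_smul]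

lemma rho_NP_cone (X : W) (hX : ∀ l, NP (rho M K hMK cs X (ee l))) (v : Fin n → ℝ)
    (hv : NN v) : NP (rho M K hMK cs X v) := by
  rw [rho_apply_sum]
  intro c
  rw [Finset.sum_apply]
  apply Finset.sum_nonpos
  intro k _
  simp only [Pi.smul_apply, smul_eq_mul]
  exact mul_nonpos_of_nonneg_of_nonpos (hv k) (hX k c)

lemma sig_pres (x : W) (i l : Fin n) (h1 : NN (rho M K hMK cs x (ee i)))
    (k₀ : Fin n) (hk0l : k₀ ≠ l) (hk0 : 0 < rho M K hMK cs x (ee i) k₀) :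
    NN (rho M K hMK cs (σ l * x) (ee i)) ∧
      ∀ k, k ≠ l → rho M K hMK cs (σ l * x) (ee i) k = rho M K hMK cs x (ee i) k := by
  have hco : ∀ k, k ≠ l → rho M K hMK cs (σ l * x) (ee i) k = rho M K hMK cs x (ee i) k := by
    intro k hkl
    rw [rho_mul_apply, rho_simple, reflLin_apply]
    simp [ee, Pi.single_eq_of_ne hkl]
  refine ⟨?_, hco⟩
  rcases NN_or_NP M K hMK cs (σ l * x) i with h | h
  · exact h
  · exfalso
    have := h k₀
    rw [hco k₀ hk0l] at this
    linarith

lemma Jword_pres (J : Set (Fin n)) : ∀ (ω : List (Fin n)), (∀ l ∈ ω, l ∈ J) →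
    ∀ (x : W) (i : Fin n), NN (rho M K hMK cs x (ee i)) →
    (∃ k, k ∉ J ∧ 0 < rho M K hMK cs x (ee i) k) →
    NN (rho M K hMK cs ((π ω) * x) (ee i)) ∧
      (∀ k, k ∉ J → rho M K hMK cs ((π ω) * x) (ee i) k = rho M K hMK cs x (ee i) k) := by
  intro ω
  induction ω with
  | nil =>
    intro _ x i h1 _
    rw [wordProd_nil, one_mul]
    exact ⟨h1, fun _ _ => rfl⟩
  | cons l ω ih =>
    intro hmem x i h1 h2
    obtain ⟨hNN', hco'⟩ := ih (fun t ht => hmem t (List.mem_cons_of_mem l ht)) x i h1 h2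
    obtain ⟨k₀, hk₀J, hk₀⟩ := h2
    have hl : l ∈ J := hmem l List.mem_cons_self
    have hics : π (l :: ω) * x = σ l * ((π ω) * x) := by rw [wordProd_cons, mul_assoc]
    have hk₀l : k₀ ≠ l := fun h => hk₀J (h ▸ hl)
    have h0' : 0 < rho M K hMK cs ((π ω) * x) (ee i) k₀ := by
      rw [hco' k₀ hk₀J]; exact hk₀
    obtain ⟨hNN2, hco2⟩ := sig_pres M K hMK cs ((π ω) * x) i l hNN' k₀ hk₀l h0'
    constructor
    · rw [hics]; exact hNN2
    · intro k hk
      rw [hics, hco2 k (fun h => hk (h ▸ hl)), hco' k hk]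

lemma mem_closure_word (J : Set (Fin n)) (u : W)
    (hu : u ∈ Subgroup.closure (cs.simple '' J)) :
    ∃ ω : List (Fin n), (∀ l ∈ ω, l ∈ J) ∧ π ω = u := by
  induction hu using Subgroup.closure_induction with
  | mem x hx =>
    obtain ⟨i, hiJ, rfl⟩ := hx
    exact ⟨[i], by simpa using hiJ, cs.wordProd_singleton i⟩
  | one => exact ⟨[], by simp, cs.wordProd_nil⟩
  | mul x y _ _ hx hy =>
    obtain ⟨ω₁, h1, rfl⟩ := hx
    obtain ⟨ω₂, h2, rfl⟩ := hy
    exact ⟨ω₁ ++ ω₂, by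
      intro l hl
      rcases List.mem_append.mp hl with h | h
      · exact h1 l h
      · exact h2 l h, cs.wordProd_append ω₁ ω₂⟩
  | inv x _ hx =>
    obtain ⟨ω, h1, rfl⟩ := hx
    exact ⟨ω.reverse, fun l hl => h1 l (List.mem_reverse.mp hl), cs.wordProd_reverse ω⟩

include M hMK in
lemma all_descents_max (X : W) (hX : ∀ l, cs.IsRightDescent X l) :
    ∀ u : W, ℓ (X * u) + ℓ u = ℓ X := by
  have hXnp : ∀ l, NP (rho M K hMK cs X (ee l)) :=
    fun l => np_of_descent M K hMK cs X l (hX l)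
  intro u
  obtain ⟨ω, hlen, rfl⟩ := cs.exists_reduced_word u
  have hredω : cs.IsReduced ω := by rw [CoxeterSystem.IsReduced, hlen]
  suffices h : ∀ t, t ≤ ω.length → ℓ (X * π (ω.take t)) + t = ℓ X by
    have := h ω.length le_rfl
    rw [List.take_length] at this
    have := hlen.eq
    omega
  intro t
  induction t with
  | zero => intro _; simp
  | succ t iht =>
    intro ht
    have ht' : t < ω.length := by omega
    have hstep := iht (by omega)
    set i := ω.get ⟨t, ht'⟩ with hi
    have htake : ω.take (t+1) = ω.take t ++ [i] := by
      rw [hi, ← List.take_concat_get ht', List.concat_eq_append]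
      simp
    have hw1 : π (ω.take (t+1)) = π (ω.take t) * σ i := by
      rw [htake, cs.wordProd_append, cs.wordProd_singleton]
    have hredt : ℓ (π (ω.take t)) = t := by
      have := hredω.take t
      rw [CoxeterSystem.IsReduced] at this
      rwa [List.length_take, min_eq_left (by omega)] at this
    have hredt1 : ℓ (π (ω.take (t+1))) = t + 1 := by
      have := hredω.take (t+1)
      rw [CoxeterSystem.IsReduced] at this
      rwa [List.length_take, min_eq_left (by omega)] at this
    have hnd : ¬ cs.IsRightDescent (π (ω.take t)) i := by
      rw [cs.not_isRightDescent_iff, ← hw1, hredt1, hredt]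
    have hγnn := pos_of_not_descent M K hMK cs (π (ω.take t)) i hnd
    have hnp : NP (rho M K hMK cs (X * π (ω.take t)) (ee i)) := by
      have : rho M K hMK cs (X * π (ω.take t)) (ee i)
          = rho M K hMK cs X (rho M K hMK cs (π (ω.take t)) (ee i)) := rho_mul_apply ..
      rw [this]
      exact rho_NP_cone M K hMK cs X hXnp _ hγnn
    have hd : cs.IsRightDescent (X * π (ω.take t)) i :=
      descent_of_np M K hMK cs _ i hnp
    have := cs.isRightDescent_iff.mp hd
    have hXw1 : X * π (ω.take (t+1)) = (X * π (ω.take t)) * σ i := by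
      rw [hw1, mul_assoc]
    rw [hXw1]
    omega

def dotl (lam v : Fin n → ℝ) : ℝ := ∑ k, lam k * v k

lemma dot_fire (lam v : Fin n → ℝ) (i : Fin n) :
    dotl (fire M lam i) v = dotl lam (reflLin M i v) := by
  unfold dotl fire
  rw [reflLin_apply]
  have h1 : ∑ k, (lam k - M i k * lam i) * v k
      = (∑ k, lam k * v k) - lam i * dd M i v := by
    rw [dd, Finset.mul_sum, ← Finset.sum_sub_distrib]
    exact Finset.sum_congr rfl fun k _ => by ring
  have h2 : ∑ k, lam k * (v - dd M i v • ee i) k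
      = (∑ k, lam k * v k) - lam i * dd M i v := by
    have h3 : ∑ k, lam k * (dd M i v * ee i k) = dd M i v * lam i := by
      simp [ee, Pi.single_apply, mul_ite, Finset.sum_ite_eq']
      ring
    simp only [Pi.sub_apply, Pi.smul_apply, smul_eq_mul]
    have h4 : ∑ x, lam x * (v x - dd M i v * ee i x)
        = ∑ x, (lam x * v x - lam x * (dd M i v * ee i x)) :=
      Finset.sum_congr rfl fun k _ => by ring
    rw [h4, Finset.sum_sub_distrib, h3]
    ring
  rw [h1, h2]

lemma play_eq : ∀ (seq : List (Fin n)) (lam : Fin n → ℝ) (j : Fin n),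
    play M lam seq j = dotl lam (rho M K hMK cs (π seq) (ee j)) := by
  intro seq
  induction seq with
  | nil =>
    intro lam j
    show lam j = _
    rw [wordProd_nil, map_one]
    simp only [Module.End.one_apply, dotl]
    simp [ee, Pi.single_apply, mul_ite, Finset.sum_ite_eq']
  | cons i rest ih =>
    intro lam j
    show play M (fire M lam i) rest j = _
    rw [ih (fire M lam i) j, wordProd_cons, rho_mul_apply, rho_simple, dot_fire]

lemma legal_get : ∀ (seq : List (Fin n)) (lam : Fin n → ℝ), Legal M lam seq →
    ∀ t (ht : t < seq.length), 0 < play M lam (seq.take t) (seq.get ⟨t, ht⟩) := by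
  intro seq
  induction seq with
  | nil => intro lam _ t ht; simp at ht
  | cons i rest ih =>
    intro lam hleg t ht
    obtain ⟨h0, hrest⟩ := hleg
    match t with
    | 0 => exact h0
    | (t'+1) =>
      have ht' : t' < rest.length := by simpa using ht
      exact ih (fire M lam i) hrest t' ht'

include hMK in
lemma main (J : Set (Fin n))
    (w₀ : W) (hw₀ : ∀ w : W, ℓ w ≤ ℓ w₀)
    (w₀J : W) (hw₀J_mem : w₀J ∈ Subgroup.closure (cs.simple '' J))
    (hw₀J : ∀ w ∈ Subgroup.closure (cs.simple '' J), ℓ w ≤ ℓ w₀J)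
    (lam : Fin n → ℝ) (hpos : ∀ i ∉ J, 0 < lam i) (hzero : ∀ j ∈ J, lam j = 0)
    (seq : List (Fin n)) (hleg : Legal M lam seq)
    (hmax : ∀ i, ¬ (0 < play M lam seq i)) :
    seq.length = ℓ w₀ - ℓ w₀J := by
  classical
  have hlam : ∀ k, 0 ≤ lam k := by
    intro k
    by_cases h : k ∈ J
    · rw [hzero k h]
    · exact (hpos k h).le
  obtain ⟨ωJ, hωJmem, hωJprod⟩ := mem_closure_word K cs J w₀J hw₀J_mem
  -- length bookkeeping along the legal sequence
  have steps : ∀ t, t ≤ seq.length →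
      ℓ (π (seq.take t)) = t ∧ ℓ (w₀J * π (seq.take t)) = ℓ w₀J + t := by
    intro t
    induction t with
    | zero => intro _; constructor <;> simp
    | succ t iht =>
      intro ht
      have ht' : t < seq.length := by omega
      obtain ⟨hl1, hl2⟩ := iht (by omega)
      set i := seq.get ⟨t, ht'⟩ with hi
      have htake : seq.take (t+1) = seq.take t ++ [i] := by
        rw [hi, ← List.take_concat_get ht', List.concat_eq_append]
        rfl
      have hw1 : π (seq.take (t+1)) = π (seq.take t) * σ i := by
        rw [htake, cs.wordProd_append, cs.wordProd_singleton]
      set β := rho M K hMK cs (π (seq.take t)) (ee i) with hβ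
      have hplay : 0 < dotl lam β := by
        rw [hβ, ← play_eq M K hMK cs]
        exact legal_get M seq lam hleg t ht'
      have hnd : ¬ cs.IsRightDescent (π (seq.take t)) i := by
        intro hd
        have hnp := np_of_descent M K hMK cs _ i hd
        have : dotl lam β ≤ 0 := by
          apply Finset.sum_nonpos
          intro k _
          exact mul_nonpos_of_nonneg_of_nonpos (hlam k) (hnp k)
        linarith
      have hι1 : ℓ (π (seq.take (t+1))) = t + 1 := by
        rw [hw1]
        rw [cs.not_isRightDescent_iff] at hnd
        omega
      have hβnn : NN β := pos_of_not_descent M K hMK cs _ i hnd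
      have hk₀ : ∃ k, k ∉ J ∧ 0 < β k := by
        have hex : ∃ k ∈ Finset.univ, 0 < lam k * β k := by
          by_contra h'
          push_neg at h'
          have : dotl lam β ≤ 0 := Finset.sum_nonpos h'
          linarith
        obtain ⟨k, _, hk⟩ := hex
        have hlamk : 0 < lam k := by
          rcases lt_or_eq_of_le (hlam k) with h | h
          · exact h
          · rw [← h, zero_mul] at hk; linarith
        have hβk : 0 < β k := by nlinarith
        exact ⟨k, fun hkJ => by rw [hzero k hkJ] at hlamk; exact lt_irrefl 0 hlamk, hβk⟩
      have hJw := Jword_pres M K hMK cs J ωJ hωJmem (π (seq.take t)) i hβnn hk₀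
      have hnd2 : ¬ cs.IsRightDescent (w₀J * π (seq.take t)) i := by
        apply not_descent_of_nn M K hMK cs
        rw [← hωJprod]
        exact hJw.1
      refine ⟨hι1, ?_⟩
      have hXw1 : w₀J * π (seq.take (t+1)) = (w₀J * π (seq.take t)) * σ i := by
        rw [hw1, mul_assoc]
      rw [hXw1]
      rw [cs.not_isRightDescent_iff] at hnd2
      omega
  -- the final element
  obtain ⟨hlenw, hlenX⟩ := steps seq.length le_rfl
  rw [List.take_length] at hlenw hlenX
  set w : W := π seq with hw
  set X : W := w₀J * w with hX
  -- the parabolic descents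
  have hJdesc : ∀ k ∈ J, NP (rho M K hMK cs w₀J (ee k)) := by
    intro k hk
    apply np_of_descent M K hMK cs
    have hmem : w₀J * σ k ∈ Subgroup.closure (cs.simple '' J) :=
      mul_mem hw₀J_mem (Subgroup.subset_closure ⟨k, hk, rfl⟩)
    have hle : ℓ (w₀J * σ k) ≤ ℓ w₀J := hw₀J _ hmem
    have hne := cs.length_mul_simple_ne w₀J k
    exact lt_of_le_of_ne hle hne
  -- every simple generator is a right descent of X
  have hXdesc : ∀ i, cs.IsRightDescent X i := by
    intro i
    by_cases hdi : cs.IsRightDescent w i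
    · have h1 : ℓ (w * σ i) + 1 = ℓ w := cs.isRightDescent_iff.mp hdi
      have h2 : ℓ (X * σ i) ≤ ℓ w₀J + ℓ (w * σ i) := by
        rw [hX, mul_assoc]
        exact cs.length_mul_le w₀J (w * σ i)
      have : ℓ (X * σ i) < ℓ X := by omega
      exact this
    · set β := rho M K hMK cs w (ee i) with hβ
      have hβnn : NN β := pos_of_not_descent M K hMK cs w i hdi
      have hdot : dotl lam β ≤ 0 := by
        have := hmax i
        rw [play_eq M K hMK cs seq lam i] at this
        rw [hβ, hw]
        linarith [not_lt.mp this]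
      have hterms : ∀ k ∈ Finset.univ, lam k * β k = 0 := by
        have hnn : ∀ k ∈ Finset.univ, 0 ≤ lam k * β k :=
          fun k _ => mul_nonneg (hlam k) (hβnn k)
        intro k hk
        have hsum0 : dotl lam β = 0 :=
          le_antisymm hdot (Finset.sum_nonneg hnn)
        exact (Finset.sum_eq_zero_iff_of_nonneg hnn).mp hsum0 k hk
      have hβJ : ∀ k, k ∉ J → β k = 0 := by
        intro k hkJ
        have h0 := hterms k (Finset.mem_univ k)
        have hlamk : 0 < lam k := hpos k hkJ
        rcases mul_eq_zero.mp h0 with h | h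
        · linarith
        · exact h
      apply descent_of_np M K hMK cs
      have hXβ : rho M K hMK cs X (ee i) = ∑ k, β k • rho M K hMK cs w₀J (ee k) := by
        rw [hX, rho_mul_apply, hβ, rho_apply_sum]
      rw [hXβ]
      intro c
      rw [Finset.sum_apply]
      apply Finset.sum_nonpos
      intro k _
      simp only [Pi.smul_apply, smul_eq_mul]
      by_cases hk : k ∈ J
      · exact mul_nonpos_of_nonneg_of_nonpos (hβnn k) (hJdesc k hk c)
      · rw [hβJ k hk, zero_mul]
  -- X has maximal length
  have hmaxX := all_descents_max M K hMK cs X hXdesc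
  have hXw₀ : ℓ X = ℓ w₀ := by
    have h1 := hmaxX (X⁻¹ * w₀)
    rw [mul_inv_cancel_left] at h1
    have h2 := hw₀ X
    omega
  omega

end CoxeterSide

end NG

/-- Suppose the Coxeter group `W` of an E-GCM graph is finite, with longest element `w₀`,
and let `(w₀)_J` be the longest element of the parabolic subgroup `W_J`. Then every game
sequence (maximal legal firing sequence) of the numbers game from any position `λ` with
`λ_i > 0` for `i ∉ J` and `λ_j = 0` for `j ∈ J` has length exactly `ℓ(w₀) − ℓ((w₀)_J)`. -/
theorem game_length_from_CJ {n : ℕ} {W : Type*} [Group W] [Finite W]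
    (M : Matrix (Fin n) (Fin n) ℝ) (K : CoxeterMatrix (Fin n)) (hMK : IsEGCM M K)
    (cs : CoxeterSystem K W)
    (J : Set (Fin n))
    (w₀ : W) (hw₀ : ∀ w : W, cs.length w ≤ cs.length w₀)
    (w₀J : W) (hw₀J_mem : w₀J ∈ Subgroup.closure (cs.simple '' J))
    (hw₀J : ∀ w ∈ Subgroup.closure (cs.simple '' J), cs.length w ≤ cs.length w₀J)
    (lam : Fin n → ℝ) (hpos : ∀ i ∉ J, 0 < lam i) (hzero : ∀ j ∈ J, lam j = 0)
    (seq : List (Fin n)) (hleg : Legal M lam seq)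
    (hmax : ∀ i, ¬ (0 < play M lam seq i)) :
    seq.length = cs.length w₀ - cs.length w₀J := by
  exact NG.main M K hMK cs J w₀ hw₀ w₀J hw₀J_mem hw₀J lam hpos hzero seq hleg hmax
end
end
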